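/- arXiv:2003.11686 — 3 statements merged into one kernel-verified Lean document; each statement's English description precedes it below -/
import Mathlib

section
/- For every α > 0 there exist η₀ > 0 and n₀ ∈ ℕ such that the following holds for all 0 < η ≤ η₀ and all n ≥ n₀: if H is an n-vertex 3-graph with minimum codegree δ₂(H) ≥ (1/3 + α)n, then for every vertex v of H, the set Ñ_{η,1}(v) of vertices that are (η,1)-reachable to v has size at least (1/3 + α/2)n. -/
open Finset

variable {V : Type*} [DecidableEq V] [Fintype V]

/-- A tight path in a 3-graph `H`: a list of distinct vertices in which every 3
consecutive vertices form an edge of `H`. -/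
def IsTightPath (H : Finset (Finset V)) (l : List V) : Prop :=
  l.Nodup ∧ ∀ (i : ℕ) (h : i + 2 < l.length),
    ({l[i]'(by omega), l[i + 1]'(by omega), l[i + 2]'(by omega)} : Finset V) ∈ H

/-- The codegree of a pair of vertices. -/
def codeg (H : Finset (Finset V)) (u v : V) : ℕ :=
  (H.filter fun e => u ∈ e ∧ v ∈ e).card

/-- The first end of a tight path `v₁ v₂ ⋯ v_p`, i.e. the ordered pair `(v₂, v₁)`. -/
def firstEnd (l : List V) : Option (V × V) :=
  match l with
  | a :: b :: _ => some (b, a)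
  | _ => none

/-- The last end of a tight path `v₁ v₂ ⋯ v_p`, i.e. the ordered pair `(v_{p-1}, v_p)`. -/
def lastEnd (l : List V) : Option (V × V) :=
  firstEnd l.reverse

/-- The set of vertices covered by a family of paths. -/
def famVerts (Ps : List (List V)) : Finset V :=
  Ps.foldr (fun P s => P.toFinset ∪ s) ∅

/-- A family of pairwise vertex-disjoint tight paths. -/
def PathFamily (H : Finset (Finset V)) (Ps : List (List V)) : Prop :=
  (∀ P ∈ Ps, IsTightPath H P) ∧
  Ps.Pairwise fun P Q => Disjoint P.toFinset Q.toFinset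

/-- Two families of paths have the same length and corresponding members have the same ends. -/
def SameEndsList (Ps Qs : List (List V)) : Prop :=
  Ps.length = Qs.length ∧ ∀ j < Ps.length,
    firstEnd (Ps.getD j []) = firstEnd (Qs.getD j []) ∧
    lastEnd (Ps.getD j []) = lastEnd (Qs.getD j [])

/-- `u` and `v` are `(β, i)`-reachable in `H`. -/
def Reachable (H : Finset (Finset V)) (β : ℝ) (i : ℕ) (u v : V) : Prop :=
  β * (Fintype.card V : ℝ) ^ (5 * i - 1) ≤
    (({T : Finset V | T.card = 5 * i - 1 ∧
      ∃ Ps Qs : List (List V), Ps.length = i ∧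
        (∀ P ∈ Ps, IsTightPath H P ∧ P.length = 5) ∧
        (∀ Q ∈ Qs, IsTightPath H Q ∧ Q.length = 5) ∧
        Ps.Pairwise (fun P P' => Disjoint P.toFinset P'.toFinset) ∧
        Qs.Pairwise (fun Q Q' => Disjoint Q.toFinset Q'.toFinset) ∧
        famVerts Ps = insert u T ∧ famVerts Qs = insert v T ∧
        SameEndsList Ps Qs} : Set (Finset V)).ncard : ℝ)

/-- The set `Ñ_{β,i}(v)` of vertices `(β,i)`-reachable to `v`. -/
def reachSet (H : Finset (Finset V)) (β : ℝ) (i : ℕ) (v : V) : Set V :=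
  {u | u ≠ v ∧ Reachable H β i u v}

/-- A vertex set is `(β, i)`-closed in `H`. -/
def IsClosedSet (H : Finset (Finset V)) (β : ℝ) (i : ℕ) (U : Finset V) : Prop :=
  ∀ u ∈ U, ∀ v ∈ U, u ≠ v → Reachable H β i u v

/-- `Ps` is an `S`-absorber in `H`. -/
def IsAbsorber (H : Finset (Finset V)) (S : Finset V) (Ps : List (List V)) : Prop :=
  PathFamily H Ps ∧ Disjoint (famVerts Ps) S ∧
  ∃ Qs : List (List V), PathFamily H Qs ∧ famVerts Qs = famVerts Ps ∪ S ∧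
    SameEndsList Ps Qs

/-- Two edges of `H` sharing exactly two vertices. -/
def EdgeAdj (H : Finset (Finset V)) (e f : Finset V) : Prop :=
  e ∈ H ∧ f ∈ H ∧ (e ∩ f).card = 2

/-- Two edges lie in the same tight component: they are joined by a pseudo-path. -/
def SameTightComponent (H : Finset (Finset V)) (e f : Finset V) : Prop :=
  e ∈ H ∧ f ∈ H ∧ Relation.ReflTransGen (EdgeAdj H) e f

/-- `H` has at most two tight components: among any three edges two lie in a common
tight component. -/
def AtMostTwoTightComponents (H : Finset (Finset V)) : Prop :=
  ∀ e ∈ H, ∀ f ∈ H, ∀ g ∈ H,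
    SameTightComponent H e f ∨ SameTightComponent H e g ∨ SameTightComponent H f g

/-- The number of edges of `H` containing the set `p`. -/
def degPair (H : Finset (Finset V)) (p : Finset V) : ℕ :=
  (H.filter fun e => p ⊆ e).card

/-- `H` is `(μ, θ)`-dense: all but at most `θ * C(n,2)` pairs have codegree at least `μ n`. -/
def Dense3 (H : Finset (Finset V)) (μ θ : ℝ) : Prop :=
  (({p : Finset V | p.card = 2 ∧ (degPair H p : ℝ) < μ * Fintype.card V} :
      Set (Finset V)).ncard : ℝ) ≤ θ * ((Fintype.card V).choose 2)

/-- `H` is strongly `(μ, θ)`-dense. -/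
def StronglyDense3 (H : Finset (Finset V)) (μ θ : ℝ) : Prop :=
  Dense3 H μ θ ∧ ∀ p : Finset V, p.card = 2 →
    degPair H p = 0 ∨ μ * Fintype.card V ≤ (degPair H p : ℝ)

/-- A tight Hamilton cycle: a cyclic ordering of all vertices in which every 3
cyclically consecutive vertices form an edge. -/
def IsTightHamCycle (H : Finset (Finset V)) (l : List V) : Prop :=
  l.Nodup ∧ l.toFinset = Finset.univ ∧ 3 ≤ l.length ∧
  ∀ (i : ℕ) (h : i < l.length),
    ({l[i]'h, l[(i + 1) % l.length]'(Nat.mod_lt _ (by omega)),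
      l[(i + 2) % l.length]'(Nat.mod_lt _ (by omega))} : Finset V) ∈ H

/-- `H ∗ K_t^{(3)}`: add `t` new vertices and all triples meeting them. -/
def starK (H : Finset (Finset V)) (t : ℕ) : Finset (Finset (V ⊕ Fin t)) :=
  (Finset.univ : Finset (Finset (V ⊕ Fin t))).filter fun e =>
    e.card = 3 ∧ ((∃ x ∈ e, x.isRight = true) ∨ ∃ f ∈ H, e = f.image Sum.inl)

/-- The link of a vertex: the set of pairs forming an edge together with it. -/
def linkPairs (H : Finset (Finset V)) (u : V) : Set (Finset V) :=
  {p | p.card = 2 ∧ u ∉ p ∧ insert u p ∈ H}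

/-!
For `u ≠ v`, call the graph of pairs `bc` with `ubc, vbc ∈ H` the common link of `u` and `v`.
If it has `βn²` edges, then it contains `≳ β³n⁴` paths `abcd` (after discarding low-degree
vertices, every edge extends to `≳ β²n²` such paths), and each of them yields the tight paths
`abucd` and `abvcd` with the same ends, so `u` and `v` are `(β³/2¹⁶, 1)`-reachable.
By the codegree condition the link of `v` has `≥ (1/3 + α)n(n - 1)` ordered edges `bc`, each
lying in the links of `≥ (1/3 + α)n` vertices `u`; averaging shows that more than
`(1/3 + α/2)n` vertices `u` have a common link with `v` of at least `αn²/24` ordered edges.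
-/

theorem card_filter_prod_eq_sum {V W : Type*} [Fintype V] [Fintype W] (P : V → W → Prop)
    [∀ b c, Decidable (P b c)] :
    #{p : V × W | P p.1 p.2} = ∑ b, #{c | P b c} := by
  simp only [card_filter, Fintype.sum_prod_type]

section ThreePaths

variable {V : Type*} [Fintype V] (G : SimpleGraph V) [DecidableRel G.Adj]

theorem sum_degree_eq_card_adj : ∑ b, G.degree b = #{p : V × V | G.Adj p.1 p.2} := by
  simp only [card_filter_prod_eq_sum G.Adj, ← SimpleGraph.card_neighborFinset_eq_degree,
    SimpleGraph.neighborFinset_eq_filter]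

theorem card_adj_degree_lt_le (K : ℕ) :
    #{p : V × V | G.Adj p.1 p.2 ∧ G.degree p.1 < K} ≤ Fintype.card V * K := by
  rw [card_filter_prod_eq_sum (fun b c => G.Adj b c ∧ G.degree b < K), ← smul_eq_mul,
    ← card_univ]
  refine sum_le_card_nsmul _ _ _ fun b _ => ?_
  by_cases hb : G.degree b < K
  · simp only [hb, and_true, ← SimpleGraph.neighborFinset_eq_filter,
      SimpleGraph.card_neighborFinset_eq_degree]
    exact hb.le
  · simp [hb]

theorem sum_degree_le_card_adj_degree_ge_add [DecidableEq V] (K : ℕ) :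
    ∑ b, G.degree b ≤
      #{p : V × V | G.Adj p.1 p.2 ∧ K ≤ G.degree p.1 ∧ K ≤ G.degree p.2} +
        2 * (Fintype.card V * K) := by
  set low := ({p : V × V | G.Adj p.1 p.2 ∧ G.degree p.1 < K} : Finset (V × V))
  have hsub : ({p : V × V | G.Adj p.1 p.2} : Finset (V × V)) ⊆
      ({p : V × V | G.Adj p.1 p.2 ∧ K ≤ G.degree p.1 ∧ K ≤ G.degree p.2} :
        Finset (V × V)) ∪ (low ∪ low.image Prod.swap) := by
    intro p hp
    simp only [mem_filter, mem_univ, true_and, mem_union, mem_image, low] at hp ⊢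
    by_cases h1 : K ≤ G.degree p.1 <;> by_cases h2 : K ≤ G.degree p.2
    · exact Or.inl ⟨hp, h1, h2⟩
    · exact Or.inr (Or.inr ⟨p.swap, ⟨hp.symm, by simpa using h2⟩, rfl⟩)
    all_goals exact Or.inr (Or.inl ⟨hp, by simpa using h1⟩)
  calc ∑ b, G.degree b = #{p : V × V | G.Adj p.1 p.2} := sum_degree_eq_card_adj G
    _ ≤ _ := card_le_card hsub
    _ ≤ _ := card_union_le _ _
    _ ≤ _ := by
      gcongr
      refine (card_union_le _ _).trans ?_
      have hlow : #low ≤ Fintype.card V * K := card_adj_degree_lt_le G K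
      have := card_image_le (s := low) (f := Prod.swap)
      omega

def IsThreePath (a b c d : V) : Prop :=
  G.Adj a b ∧ G.Adj b c ∧ G.Adj c d ∧ a ≠ c ∧ b ≠ d ∧ a ≠ d

instance [DecidableEq V] (a b c d : V) : Decidable (IsThreePath G a b c d) := by
  unfold IsThreePath; infer_instance

def threePathExtensions [DecidableEq V] (b c : V) : Finset (V × V) :=
  {ad | IsThreePath G ad.1 b c ad.2}

theorem degree_mul_degree_le [DecidableEq V] {b c : V} (hbc : G.Adj b c) :
    G.degree b * G.degree c ≤ #(threePathExtensions G b c) + 3 * Fintype.card V := by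
  have hsub : G.neighborFinset b ×ˢ G.neighborFinset c ⊆ threePathExtensions G b c ∪
      (univ.image (c, ·) ∪ univ.image (·, b) ∪ univ.image fun a => (a, a)) := by
    rintro ⟨a, d⟩ had
    simp only [mem_product, SimpleGraph.mem_neighborFinset] at had
    simp only [threePathExtensions, mem_union, mem_filter, mem_univ, true_and, mem_image,
      Prod.mk.injEq]
    by_cases hac : a = c
    · exact Or.inr (Or.inl (Or.inl ⟨d, hac.symm, rfl⟩))
    by_cases hbd : b = d
    · exact Or.inr (Or.inl (Or.inr ⟨a, rfl, hbd⟩))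
    by_cases had' : a = d
    · exact Or.inr (Or.inr ⟨a, rfl, had'⟩)
    exact Or.inl ⟨had.1.symm, hbc, had.2, hac, hbd, had'⟩
  calc G.degree b * G.degree c = #(G.neighborFinset b ×ˢ G.neighborFinset c) := by
        simp only [card_product, SimpleGraph.card_neighborFinset_eq_degree]
    _ ≤ _ := card_le_card hsub
    _ ≤ _ := card_union_le _ _
    _ ≤ _ := by
      gcongr
      refine (card_union_le _ _).trans ?_
      have h1 := (card_union_le (univ.image (c, ·)) (univ.image (·, b))).trans
        (add_le_add card_image_le card_image_le)
      have h2 := card_image_le (s := univ) (f := fun a : V => (a, a))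
      simp only [card_univ] at h1 h2
      omega

/-- A path `a b c d` is recorded as `⟨(b, c), (a, d)⟩`, middle edge first. -/
def threePathQuads [DecidableEq V] : Finset (Σ _ : V × V, V × V) :=
  univ.sigma fun p => threePathExtensions G p.1 p.2

def threePathSets [DecidableEq V] : Finset (Finset V) :=
  (threePathQuads G).image fun q => {q.2.1, q.1.1, q.1.2, q.2.2}

theorem card_threePathQuads_le [DecidableEq V] :
    #(threePathQuads G) ≤ 4 ^ 4 * #(threePathSets G) := by
  refine card_le_mul_card_image _ _ fun T hT => ?_
  obtain ⟨q, -, rfl⟩ := mem_image.mp hT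
  set T : Finset V := {q.2.1, q.1.1, q.1.2, q.2.2}
  have hsub : {r ∈ threePathQuads G | {r.2.1, r.1.1, r.1.2, r.2.2} = T} ⊆
      (T ×ˢ T).sigma fun _ => T ×ˢ T := by
    intro r hr
    rw [mem_filter] at hr
    simp [← hr.2]
  calc _ ≤ _ := card_le_card hsub
    _ = #T ^ 4 := by simp only [card_sigma, card_product, sum_const, smul_eq_mul]; ring
    _ ≤ 4 ^ 4 := by gcongr; exact card_le_four

theorem card_threePathSets_ge [DecidableEq V] {β : ℝ} (hβn : 8 ≤ β * Fintype.card V)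
    (hβ2n : 384 ≤ β ^ 2 * Fintype.card V)
    (hdeg : β * Fintype.card V ^ 2 ≤ ((∑ b, G.degree b : ℕ) : ℝ)) :
    β ^ 3 * Fintype.card V ^ 4 / 2 ^ 16 ≤ #(threePathSets G) := by
  set n := Fintype.card V
  set K := ⌊β * n / 4⌋₊
  have hK : (K : ℝ) ≤ β * n / 4 := Nat.floor_le (by linarith)
  have hK' : β * n / 8 ≤ K := by linarith [Nat.lt_floor_add_one (β * n / 4)]
  -- Discarding the edges at vertices of degree `< K` leaves `≥ βn²/2` edges `bc`, and each
  -- of them is the middle edge of `≥ K² - 3n` paths.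
  set good : Finset (V × V) := {p | G.Adj p.1 p.2 ∧ K ≤ G.degree p.1 ∧ K ≤ G.degree p.2}
  have hgood : β * n ^ 2 / 2 ≤ #good := by
    have h : ((∑ b, G.degree b : ℕ) : ℝ) ≤ #good + 2 * ((n : ℝ) * K) := by
      exact_mod_cast sum_degree_le_card_adj_degree_ge_add G K
    nlinarith
  have hext : ∀ p ∈ good, (K : ℝ) ^ 2 - 3 * n ≤ #(threePathExtensions G p.1 p.2) := by
    intro p hp
    simp only [good, mem_filter, mem_univ, true_and] at hp
    have h : ((K * K : ℕ) : ℝ) ≤ #(threePathExtensions G p.1 p.2) + 3 * n := by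
      exact_mod_cast (Nat.mul_le_mul hp.2.1 hp.2.2).trans (degree_mul_degree_le G hp.1)
    push_cast at h
    nlinarith
  have hquads : #good * ((K : ℝ) ^ 2 - 3 * n) ≤ #(threePathQuads G) := by
    rw [threePathQuads, card_sigma, ← nsmul_eq_mul]
    push_cast
    calc _ ≤ ∑ p ∈ good, (#(threePathExtensions G p.1 p.2) : ℝ) :=
          card_nsmul_le_sum _ _ _ hext
      _ ≤ _ := sum_le_sum_of_subset_of_nonneg (subset_univ _) fun _ _ _ => by positivity
  have hfib : (#(threePathQuads G) : ℝ) ≤ 4 ^ 4 * #(threePathSets G) := by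
    exact_mod_cast card_threePathQuads_le G
  have hK2 : β ^ 2 * n ^ 2 / 128 ≤ (K : ℝ) ^ 2 - 3 * n := by
    have h1 : (β * n / 8) ^ 2 ≤ (K : ℝ) ^ 2 := pow_le_pow_left₀ (by linarith) hK' 2
    have h2 : 384 * (n : ℝ) ≤ β ^ 2 * n * n := mul_le_mul_of_nonneg_right hβ2n (by positivity)
    nlinarith
  have : β * n ^ 2 / 2 * (β ^ 2 * n ^ 2 / 128) ≤ #good * ((K : ℝ) ^ 2 - 3 * n) :=
    mul_le_mul hgood hK2 (by positivity) (by positivity)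
  nlinarith

end ThreePaths

theorem IsThreePath.mono {V : Type*} {G G' : SimpleGraph V} (hle : G ≤ G') {a b c d : V}
    (h : IsThreePath G a b c d) : IsThreePath G' a b c d :=
  ⟨hle h.1, hle h.2.1, hle h.2.2.1, h.2.2.2⟩

section Link

variable {V : Type*} [DecidableEq V] {H : Finset (Finset V)}

def linkGraph (H : Finset (Finset V)) (v : V) : SimpleGraph V where
  Adj b c := b ≠ c ∧ b ≠ v ∧ c ≠ v ∧ {v, b, c} ∈ H
  symm := ⟨fun _ _ h => ⟨h.1.symm, h.2.2.1, h.2.1, by rw [pair_comm]; exact h.2.2.2⟩⟩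
  loopless := ⟨fun _ h => h.1 rfl⟩

instance (H : Finset (Finset V)) (v : V) : DecidableRel (linkGraph H v).Adj :=
  fun b c => inferInstanceAs (Decidable (b ≠ c ∧ b ≠ v ∧ c ≠ v ∧ {v, b, c} ∈ H))

theorem linkGraph_adj_comm {u b c : V} :
    (linkGraph H u).Adj b c ↔ (linkGraph H b).Adj c u := by
  simp only [linkGraph, insert_comm u b, pair_comm u c]
  tauto

theorem exists_eq_triple_of_card_eq_three {e : Finset V} (he : e.card = 3) {v b : V}
    (hv : v ∈ e) (hb : b ∈ e) (hvb : v ≠ b) :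
    ∃ c, c ≠ v ∧ c ≠ b ∧ e = {v, b, c} := by
  have hsub : ({v, b} : Finset V) ⊆ e := insert_subset hv (singleton_subset_iff.mpr hb)
  obtain ⟨c, hc⟩ := card_eq_one.mp (by rw [card_sdiff_of_subset hsub, he, card_pair hvb] :
    (e \ {v, b}).card = 1)
  have hce : c ∈ e \ {v, b} := hc ▸ mem_singleton_self c
  simp only [mem_sdiff, mem_insert, mem_singleton, not_or] at hce
  refine ⟨c, hce.2.1, hce.2.2, ?_⟩
  rw [← union_sdiff_of_subset hsub, hc, insert_union, singleton_union]

theorem codeg_le_degree_linkGraph [Fintype V] (h3 : ∀ e ∈ H, e.card = 3) {v b : V}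
    (hvb : v ≠ b) : codeg H v b ≤ (linkGraph H v).degree b := by
  rw [← SimpleGraph.card_neighborFinset_eq_degree]
  refine card_le_card_of_surjOn (fun c => {v, b, c}) fun e he => ?_
  simp only [coe_filter, Set.mem_ofPred_eq] at he
  obtain ⟨c, hcv, hcb, rfl⟩ := exists_eq_triple_of_card_eq_three (h3 e he.1) he.2.1 he.2.2 hvb
  exact ⟨c, (SimpleGraph.mem_neighborFinset _ _ _).mpr ⟨hcb.symm, hvb.symm, hcv, he.1⟩, rfl⟩

theorem isTightPath_of_isThreePath_linkGraph {w a b c d : V}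
    (h : IsThreePath (linkGraph H w) a b c d) : IsTightPath H [a, b, w, c, d] := by
  obtain ⟨⟨hab, haw, hbw, habH⟩, ⟨hbc, -, hcw, hbcH⟩, ⟨hcd, -, hdw, hcdH⟩,
    hac, hbd, had⟩ := h
  refine ⟨by simp [*, Ne.symm hcw, Ne.symm hdw], fun i hi => ?_⟩
  simp only [List.length_cons, List.length_nil] at hi
  obtain rfl | rfl | rfl : i = 0 ∨ i = 1 ∨ i = 2 := by omega
  · rwa [insert_comm w a, pair_comm w b] at habH
  · rwa [insert_comm w b] at hbcH
  · exact hcdH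

def reachWitnesses (H : Finset (Finset V)) (i : ℕ) (u v : V) : Set (Finset V) :=
  {T | T.card = 5 * i - 1 ∧
      ∃ Ps Qs : List (List V), Ps.length = i ∧
        (∀ P ∈ Ps, IsTightPath H P ∧ P.length = 5) ∧
        (∀ Q ∈ Qs, IsTightPath H Q ∧ Q.length = 5) ∧
        Ps.Pairwise (fun P P' => Disjoint P.toFinset P'.toFinset) ∧
        Qs.Pairwise (fun Q Q' => Disjoint Q.toFinset Q'.toFinset) ∧
        famVerts Ps = insert u T ∧ famVerts Qs = insert v T ∧
        SameEndsList Ps Qs}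

theorem reachable_iff [Fintype V] {β : ℝ} {i : ℕ} {u v : V} :
    Reachable H β i u v ↔
      β * (Fintype.card V : ℝ) ^ (5 * i - 1) ≤ (reachWitnesses H i u v).ncard :=
  Iff.rfl

theorem Reachable.of_le [Fintype V] {β β' : ℝ} {i : ℕ} {u v : V} (h : Reachable H β' i u v)
    (hβ : β ≤ β') : Reachable H β i u v :=
  le_trans (by gcongr) h

theorem mem_reachWitnesses_of_isThreePath {u v a b c d : V}
    (h : IsThreePath (linkGraph H u ⊓ linkGraph H v) a b c d) :
    {a, b, c, d} ∈ reachWitnesses H 1 u v := by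
  have hu := isTightPath_of_isThreePath_linkGraph (h.mono inf_le_left)
  have hv := isTightPath_of_isThreePath_linkGraph (h.mono inf_le_right)
  obtain ⟨hab, hbc, hcd, hac, hbd, had⟩ := h
  have verts : ∀ w, famVerts [[a, b, w, c, d]] = insert w {a, b, c, d} := fun w => by
    ext x; simp [famVerts]; tauto
  refine ⟨?_, [[a, b, u, c, d]], [[a, b, v, c, d]], rfl, by simpa using hu, by simpa using hv,
    List.pairwise_singleton _ _, List.pairwise_singleton _ _, verts u, verts v, rfl, ?_⟩
  · rw [card_insert_of_notMem (by simp [hab.ne, hac, had]),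
      card_insert_of_notMem (by simp [hbc.ne, hbd]), card_pair hcd.ne]
  · intro j hj
    obtain rfl : j = 0 := by simpa using hj
    exact ⟨rfl, rfl⟩

theorem reachable_of_sum_degree_inf_linkGraph [Fintype V] {u v : V} {β : ℝ}
    (hβn : 8 ≤ β * Fintype.card V) (hβ2n : 384 ≤ β ^ 2 * Fintype.card V)
    (hdeg : β * Fintype.card V ^ 2 ≤
      ((∑ b, (linkGraph H u ⊓ linkGraph H v).degree b : ℕ) : ℝ)) :
    Reachable H (β ^ 3 / 2 ^ 16) 1 u v := by
  have hsub : (threePathSets (linkGraph H u ⊓ linkGraph H v) : Set (Finset V)) ⊆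
      reachWitnesses H 1 u v := by
    intro T hT
    obtain ⟨q, hq, rfl⟩ := mem_image.mp hT
    exact mem_reachWitnesses_of_isThreePath (mem_filter.mp (mem_sigma.mp hq).2).2
  have hcard := Set.ncard_le_ncard hsub (Set.toFinite _)
  rw [Set.ncard_coe_finset] at hcard
  rw [reachable_iff]
  calc β ^ 3 / 2 ^ 16 * (Fintype.card V : ℝ) ^ (5 * 1 - 1)
      = β ^ 3 * (Fintype.card V : ℝ) ^ 4 / 2 ^ 16 := by ring
    _ ≤ (#(threePathSets (linkGraph H u ⊓ linkGraph H v)) : ℝ) :=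
      card_threePathSets_ge _ hβn hβ2n hdeg
    _ ≤ ((reachWitnesses H 1 u v).ncard : ℝ) := by exact_mod_cast hcard

theorem sum_sum_degree_inf_linkGraph [Fintype V] (H : Finset (Finset V)) (v : V) :
    ∑ u, ∑ b, (linkGraph H u ⊓ linkGraph H v).degree b =
      ∑ b, ∑ c ∈ (linkGraph H v).neighborFinset b, (linkGraph H b).degree c := by
  simp only [← SimpleGraph.card_neighborFinset_eq_degree, SimpleGraph.neighborFinset_eq_filter,
    card_filter, sum_filter, SimpleGraph.inf_adj]
  rw [sum_comm]
  refine sum_congr rfl fun b _ => ?_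
  rw [sum_comm]
  refine sum_congr rfl fun c _ => ?_
  by_cases h : (linkGraph H v).Adj b c <;> simp [h, linkGraph_adj_comm]

end Link

theorem sum_le_card_filter_le_mul_add {ι : Type*} (s : Finset ι) (f : ι → ℝ) {M t : ℝ}
    (hM : ∀ x ∈ s, f x ≤ M) (ht : 0 ≤ t) :
    ∑ x ∈ s, f x ≤ #{x ∈ s | t ≤ f x} * M + #s * t := by
  rw [← sum_filter_add_sum_filter_not s (t ≤ f ·)]
  gcongr
  · exact sum_le_card_nsmul _ _ _ (fun x hx => hM x (mem_filter.mp hx).1) |>.trans_eq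
      (nsmul_eq_mul _ _)
  · calc _ ≤ ∑ _x ∈ {x ∈ s | ¬ t ≤ f x}, t :=
          sum_le_sum fun x hx => (not_le.mp (mem_filter.mp hx).2).le
      _ ≤ _ := by
        rw [sum_const, nsmul_eq_mul]
        gcongr
        exact filter_subset _ _

section Codegree

variable {V : Type*} [DecidableEq V] [Fintype V] {H : Finset (Finset V)} {δ : ℝ}

theorem mul_le_sum_degree_linkGraph (h3 : ∀ e ∈ H, e.card = 3)
    (hco : ∀ u v, u ≠ v → δ ≤ codeg H u v) (v : V) :
    ((Fintype.card V : ℝ) - 1) * δ ≤ ((∑ b, (linkGraph H v).degree b : ℕ) : ℝ) := by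
  have hcard : ((univ.erase v).card : ℝ) = Fintype.card V - 1 := by
    rw [card_erase_of_mem (mem_univ v), card_univ,
      Nat.cast_sub (Fintype.card_pos_iff.mpr ⟨v⟩), Nat.cast_one]
  rw [← hcard, ← nsmul_eq_mul]
  push_cast
  calc _ ≤ ∑ b ∈ univ.erase v, ((linkGraph H v).degree b : ℝ) :=
        card_nsmul_le_sum _ _ _ fun b hb => (hco v b (ne_of_mem_erase hb).symm).trans
          (by exact_mod_cast codeg_le_degree_linkGraph h3 (ne_of_mem_erase hb).symm)
    _ ≤ _ := sum_le_sum_of_subset_of_nonneg (subset_univ _) fun _ _ _ => by positivity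

theorem mul_sum_degree_linkGraph_le (h3 : ∀ e ∈ H, e.card = 3)
    (hco : ∀ u v, u ≠ v → δ ≤ codeg H u v) (v : V) :
    δ * ((∑ b, (linkGraph H v).degree b : ℕ) : ℝ) ≤
      ((∑ u, ∑ b, (linkGraph H u ⊓ linkGraph H v).degree b : ℕ) : ℝ) := by
  rw [sum_sum_degree_inf_linkGraph]
  push_cast
  rw [mul_sum]
  refine sum_le_sum fun b _ => ?_
  rw [← SimpleGraph.card_neighborFinset_eq_degree, mul_comm, ← nsmul_eq_mul]
  refine card_nsmul_le_sum _ _ _ fun c hc => (hco b c ?_).trans ?_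
  · exact ((SimpleGraph.mem_neighborFinset _ _ _).mp hc).ne
  · exact_mod_cast codeg_le_degree_linkGraph h3 ((SimpleGraph.mem_neighborFinset _ _ _).mp hc).ne

theorem card_filter_sum_degree_inf_linkGraph_ge (h3 : ∀ e ∈ H, e.card = 3) {α : ℝ}
    (hco : ∀ u v, u ≠ v → (1 / 3 + α) * Fintype.card V ≤ codeg H u v)
    (hn : 2 ≤ Fintype.card V) (hαn : 4 ≤ α * Fintype.card V) (v : V) :
    (1 / 3 + α / 2) * Fintype.card V + 1 ≤
      #{u | α / 24 * Fintype.card V ^ 2 ≤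
        ((∑ b, (linkGraph H u ⊓ linkGraph H v).degree b : ℕ) : ℝ)} := by
  set n := Fintype.card V
  set L : ℝ := ((∑ b, (linkGraph H v).degree b : ℕ) : ℝ)
  set f : V → ℝ := fun u => ((∑ b, (linkGraph H u ⊓ linkGraph H v).degree b : ℕ) : ℝ)
  have hn' : (2 : ℝ) ≤ n := by exact_mod_cast hn
  have hL : (n : ℝ) ^ 2 / 6 ≤ L := by
    have := mul_le_sum_degree_linkGraph h3 hco v
    nlinarith
  have hα : 0 < α := by nlinarith
  have hsum : (1 / 3 + α) * n * L ≤ ∑ u, f u :=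
    (mul_sum_degree_linkGraph_le h3 hco v).trans_eq (Nat.cast_sum _ _)
  have hf : ∀ u ∈ univ, f u ≤ L := fun u _ =>
    Nat.cast_le.mpr (sum_le_sum fun b _ => SimpleGraph.degree_le_of_le inf_le_right)
  have havg := sum_le_card_filter_le_mul_add univ f hf (t := α / 24 * n ^ 2) (by positivity)
  rw [card_univ] at havg
  by_contra! hlt
  have hgap : α * n / 4 < (1 / 3 + α) * n - #{u | α / 24 * n ^ 2 ≤ f u} := by linarith
  have : α * n / 4 * (n ^ 2 / 6) < ((1 / 3 + α) * n - #{u | α / 24 * n ^ 2 ≤ f u}) * L :=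
    calc _ ≤ α * n / 4 * L := by gcongr
      _ < _ := mul_lt_mul_of_pos_right hgap (lt_of_lt_of_le (by positivity) hL)
  nlinarith

theorem ncard_reachSet_ge (h3 : ∀ e ∈ H, e.card = 3) {α η : ℝ}
    (hco : ∀ u v, u ≠ v → (1 / 3 + α) * Fintype.card V ≤ codeg H u v)
    (hn : 2 ≤ Fintype.card V) (hαn : 192 ≤ α * Fintype.card V)
    (hα2n : 221184 ≤ α ^ 2 * Fintype.card V) (hη : η ≤ (α / 24) ^ 3 / 2 ^ 16) (v : V) :
    (1 / 3 + α / 2) * Fintype.card V ≤ (reachSet H η 1 v).ncard := by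
  set R : Finset V := {u | α / 24 * Fintype.card V ^ 2 ≤
    ((∑ b, (linkGraph H u ⊓ linkGraph H v).degree b : ℕ) : ℝ)}
  have hR := card_filter_sum_degree_inf_linkGraph_ge h3 hco hn (by linarith) v
  -- `192 = 24 * 8` and `221184 = 24 ^ 2 * 384` make `β = α / 24` admissible below.
  have hsub : (R.erase v : Set V) ⊆ reachSet H η 1 v := fun u hu => by
    obtain ⟨huv, huR⟩ := mem_erase.mp hu
    refine ⟨huv, (reachable_of_sum_degree_inf_linkGraph (by linarith) (by nlinarith)
      (mem_filter.mp huR).2).of_le hη⟩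
  have hcard := Set.ncard_le_ncard hsub (Set.toFinite _)
  rw [Set.ncard_coe_finset] at hcard
  have herase : #R ≤ (reachSet H η 1 v).ncard + 1 := by
    have := pred_card_le_card_erase (s := R) (a := v)
    omega
  have : (#R : ℝ) ≤ (reachSet H η 1 v).ncard + 1 := by exact_mod_cast herase
  linarith

end Codegree

theorem statement1 :
    ∀ α : ℝ, 0 < α → ∃ η₀ : ℝ, 0 < η₀ ∧ ∃ n₀ : ℕ,
    ∀ η : ℝ, 0 < η → η ≤ η₀ → ∀ n : ℕ, n₀ ≤ n →
    ∀ H : Finset (Finset (Fin n)), (∀ e ∈ H, e.card = 3) →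
    (∀ u v : Fin n, u ≠ v → (1 / 3 + α) * n ≤ (codeg H u v : ℝ)) →
    ∀ v : Fin n, (1 / 3 + α / 2) * n ≤ ((reachSet H η 1 v).ncard : ℝ) := by
  intro α hα
  refine ⟨(α / 24) ^ 3 / 2 ^ 16, by positivity,
    ⌈221184 / α ^ 2⌉₊ + ⌈192 / α⌉₊ + 2, ?_⟩
  intro η _ hη n hn H h3 hco v
  have h1 : 221184 / α ^ 2 ≤ n := Nat.ceil_le.mp (by omega)
  have h2 : 192 / α ≤ n := Nat.ceil_le.mp (by omega)
  rw [div_le_iff₀ (by positivity)] at h1 h2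
  simpa using ncard_reachSet_ge (V := Fin n) h3 (by simpa using hco) (by simp; omega)
    (by simpa [mul_comm] using h2) (by simpa [mul_comm] using h1) hη v
end

section
/- For every α > 0 there exists β₀ > 0 such that for every 0 < β ≤ β₀ there exists n₀ ∈ ℕ such that the following holds for all n ≥ n₀: let H be an n-vertex 3-graph and let P be a partition of V(H) such that every part of P is (β,2)-closed in H. Then for every 3-element set S of vertices of H, if H has at least αn³ edges e with index vector i_P(e) = i_P(S), then there are at least β⁴n³⁴/2 sets of 34 vertices of V(H) \ S, each of which is the vertex set of a family of 7 pairwise vertex-disjoint tight paths forming an S-absorber in H. -/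
open Finset

variable {V : Type*} [DecidableEq V] [Fintype V]

set_option linter.unusedSectionVars false
set_option synthInstance.maxSize 1024
set_option maxHeartbeats 1600000

section AbsorberAux

open Finset

variable {V : Type*} [DecidableEq V] [Fintype V]

/-! ### famVerts basics -/

lemma famVerts_nil : famVerts ([] : List (List V)) = ∅ := rfl

lemma famVerts_cons (P : List V) (Ps : List (List V)) :
    famVerts (P :: Ps) = P.toFinset ∪ famVerts Ps := rfl

lemma subset_famVerts {P : List V} {Ps : List (List V)} (h : P ∈ Ps) :
    P.toFinset ⊆ famVerts Ps := by
  induction Ps with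
  | nil => simp at h
  | cons Q Qs ih =>
    rcases List.mem_cons.1 h with rfl | h'
    · rw [famVerts_cons]; exact Finset.subset_union_left
    · rw [famVerts_cons]
      exact (ih h').trans Finset.subset_union_right

/-! ### small disjointness helpers -/

lemma disj_insert_insert {x y : V} {T U : Finset V} (hxy : x ≠ y) (hxU : x ∉ U)
    (hyT : y ∉ T) (hTU : Disjoint T U) : Disjoint (insert x T) (insert y U) := by
  rw [Finset.disjoint_left]
  intro a ha ha'
  rcases Finset.mem_insert.1 ha with rfl | ha
  · rcases Finset.mem_insert.1 ha' with h | h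
    · exact hxy h
    · exact hxU h
  · rcases Finset.mem_insert.1 ha' with rfl | h
    · exact hyT ha
    · exact (Finset.disjoint_left.1 hTU ha) h

/-! ### counting: edges through a fixed vertex / meeting a fixed set -/

lemma card_filter_mem_le (E : Finset (Finset V)) (k : ℕ) (hE : ∀ e ∈ E, e.card = k + 1)
    (v : V) : (E.filter fun e => v ∈ e).card ≤ (Fintype.card V) ^ k := by
  classical
  have h1 : (E.filter fun e => v ∈ e).card ≤ (Finset.univ.powersetCard k (α := V)).card := by
    apply Finset.card_le_card_of_injOn (fun e => e.erase v)
    · intro e he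
      rw [Finset.mem_coe, Finset.mem_filter] at he
      simp only [Finset.mem_coe, Finset.mem_powersetCard]
      refine ⟨Finset.subset_univ _, ?_⟩
      rw [Finset.card_erase_of_mem he.2, hE e he.1]
      omega
    · intro e he f hf hef
      simp only [Finset.coe_filter, Set.mem_setOf_eq] at he hf
      have : insert v (e.erase v) = insert v (f.erase v) := by
        rw [show e.erase v = f.erase v from hef]
      rwa [Finset.insert_erase he.2, Finset.insert_erase hf.2] at this
  calc (E.filter fun e => v ∈ e).card ≤ _ := h1
    _ = (Fintype.card V).choose k := by
        rw [Finset.card_powersetCard, Finset.card_univ]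
    _ ≤ (Fintype.card V) ^ k := Nat.choose_le_pow _ _

lemma card_filter_not_disjoint_le (E : Finset (Finset V)) (k : ℕ)
    (hE : ∀ e ∈ E, e.card = k + 1) (F : Finset V) :
    (E.filter fun e => ¬ Disjoint e F).card ≤ F.card * (Fintype.card V) ^ k := by
  classical
  have hsub : (E.filter fun e => ¬ Disjoint e F) ⊆
      F.biUnion (fun v => E.filter fun e => v ∈ e) := by
    intro e he
    simp only [Finset.mem_filter] at he
    rw [Finset.not_disjoint_iff] at he
    obtain ⟨v, hve, hvF⟩ := he.2
    exact Finset.mem_biUnion.2 ⟨v, hvF, Finset.mem_filter.2 ⟨he.1, hve⟩⟩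
  calc (E.filter fun e => ¬ Disjoint e F).card ≤ _ := Finset.card_le_card hsub
    _ ≤ ∑ v ∈ F, (E.filter fun e => v ∈ e).card := Finset.card_biUnion_le
    _ ≤ ∑ _v ∈ F, (Fintype.card V) ^ k := Finset.sum_le_sum fun v _ => card_filter_mem_le E k hE v
    _ = F.card * (Fintype.card V) ^ k := by rw [Finset.sum_const, smul_eq_mul]

/-! ### part-preserving matchings -/

lemma exists_part_matching {ℓ : ℕ} (Vs : Fin ℓ → Finset V)
    (hdisj : ∀ i j : Fin ℓ, i ≠ j → Disjoint (Vs i) (Vs j))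
    (hcover : Finset.univ.biUnion Vs = (Finset.univ : Finset V)) :
    ∀ (m : ℕ) (X Y : Finset V), X.card = m →
      (∀ j, (X ∩ Vs j).card = (Y ∩ Vs j).card) →
      ∃ g : V → V, Set.InjOn g X ∧ X.image g = Y ∧
        ∀ x ∈ X, ∃ j, x ∈ Vs j ∧ g x ∈ Vs j := by
  intro m
  induction m with
  | zero =>
    intro X Y hX hXY
    rw [Finset.card_eq_zero] at hX
    subst hX
    refine ⟨id, by simp, ?_, by simp⟩
    simp only [Finset.image_empty]
    by_contra hY
    obtain ⟨y, hy⟩ := Finset.nonempty_iff_ne_empty.2 (Ne.symm hY)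
    have hyu : y ∈ Finset.univ.biUnion Vs := by rw [hcover]; exact Finset.mem_univ y
    obtain ⟨j, _, hyj⟩ := Finset.mem_biUnion.1 hyu
    have hj := hXY j
    rw [Finset.empty_inter, Finset.card_empty] at hj
    have hmem : y ∈ Y ∩ Vs j := Finset.mem_inter.2 ⟨hy, hyj⟩
    rw [Finset.card_eq_zero.1 hj.symm] at hmem
    exact absurd hmem (Finset.notMem_empty y)
  | succ m ih =>
    intro X Y hX hXY
    obtain ⟨x, hx⟩ : X.Nonempty := Finset.card_pos.1 (by omega)
    have hxu : x ∈ Finset.univ.biUnion Vs := by rw [hcover]; exact Finset.mem_univ x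
    obtain ⟨jx, _, hxj⟩ := Finset.mem_biUnion.1 hxu
    have hYjx : (Y ∩ Vs jx).Nonempty := by
      rw [← Finset.card_pos, ← hXY jx, Finset.card_pos]
      exact ⟨x, Finset.mem_inter.2 ⟨hx, hxj⟩⟩
    obtain ⟨y, hy⟩ := hYjx
    rw [Finset.mem_inter] at hy
    have hcard' : (X.erase x).card = m := by rw [Finset.card_erase_of_mem hx, hX]; omega
    have hXY' : ∀ j, ((X.erase x) ∩ Vs j).card = ((Y.erase y) ∩ Vs j).card := by
      intro j
      by_cases hj : j = jx
      · subst hj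
        rw [Finset.erase_inter, Finset.erase_inter,
          Finset.card_erase_of_mem (Finset.mem_inter.2 ⟨hx, hxj⟩),
          Finset.card_erase_of_mem (Finset.mem_inter.2 ⟨hy.1, hy.2⟩), hXY j]
      · have hxnot : x ∉ Vs j := fun hmem =>
          (Finset.disjoint_left.1 (hdisj j jx (fun h => hj h)) hmem) hxj
        have hynot : y ∉ Vs j := fun hmem =>
          (Finset.disjoint_left.1 (hdisj j jx (fun h => hj h)) hmem) hy.2
        rw [Finset.erase_inter, Finset.erase_inter,
          Finset.erase_eq_of_notMem (fun h => hxnot (Finset.mem_inter.1 h).2),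
          Finset.erase_eq_of_notMem (fun h => hynot (Finset.mem_inter.1 h).2), hXY j]
    obtain ⟨g, hginj, hgim, hgpart⟩ := ih (X.erase x) (Y.erase y) hcard' hXY'
    classical
    refine ⟨Function.update g x y, ?_, ?_, ?_⟩
    · intro u hu v hv huv
      simp only [Finset.mem_coe] at hu hv
      by_cases hux : u = x <;> by_cases hvx : v = x
      · rw [hux, hvx]
      · exfalso
        rw [hux, Function.update_self, Function.update_of_ne hvx] at huv
        have hvX' : v ∈ X.erase x := Finset.mem_erase.2 ⟨hvx, hv⟩
        have : g v ∈ Y.erase y := by rw [← hgim]; exact Finset.mem_image_of_mem g hvX'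
        rw [← huv] at this
        exact (Finset.mem_erase.1 this).1 rfl
      · exfalso
        rw [hvx, Function.update_self, Function.update_of_ne hux] at huv
        have huX' : u ∈ X.erase x := Finset.mem_erase.2 ⟨hux, hu⟩
        have : g u ∈ Y.erase y := by rw [← hgim]; exact Finset.mem_image_of_mem g huX'
        rw [huv] at this
        exact (Finset.mem_erase.1 this).1 rfl
      · rw [Function.update_of_ne hux, Function.update_of_ne hvx] at huv
        exact hginj (Finset.mem_erase.2 ⟨hux, hu⟩) (Finset.mem_erase.2 ⟨hvx, hv⟩) huv
    · have hXi : X = insert x (X.erase x) := (Finset.insert_erase hx).symm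
      rw [hXi, Finset.image_insert, Function.update_self]
      have himg : (X.erase x).image (Function.update g x y) = (X.erase x).image g := by
        apply Finset.image_congr
        intro u hu
        exact Function.update_of_ne (Finset.mem_erase.1 hu).1 y g
      rw [himg, hgim, Finset.insert_erase hy.1]
    · intro u hu
      by_cases hux : u = x
      · subst hux
        rw [Function.update_self]
        exact ⟨jx, hxj, hy.2⟩
      · rw [Function.update_of_ne hux]
        exact hgpart u (Finset.mem_erase.2 ⟨hux, hu⟩)

end AbsorberAux

section ThetaCount

variable {V : Type*} [DecidableEq V] [Fintype V]

def find3 (E : Finset (Finset V)) (a b c : V) : ℝ :=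
  if ({a, b, c} : Finset V) ∈ E then 1 else 0

lemma find3_nonneg (E : Finset (Finset V)) (a b c : V) : 0 ≤ find3 E a b c := by
  unfold find3; split <;> norm_num

def W12 (E : Finset (Finset V)) (b₁ b₂ c₁ c₂ a₁ a₂ a₃ : V) : Prop :=
  (({a₁, b₁, c₁} : Finset V) ∈ E ∧ ({a₁, b₂, c₁} : Finset V) ∈ E ∧
   ({a₁, b₁, c₂} : Finset V) ∈ E ∧ ({a₁, b₂, c₂} : Finset V) ∈ E) ∧
  (({a₂, b₁, c₁} : Finset V) ∈ E ∧ ({a₂, b₂, c₁} : Finset V) ∈ E ∧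
   ({a₂, b₁, c₂} : Finset V) ∈ E ∧ ({a₂, b₂, c₂} : Finset V) ∈ E) ∧
  (({a₃, b₁, c₁} : Finset V) ∈ E ∧ ({a₃, b₂, c₁} : Finset V) ∈ E ∧
   ({a₃, b₁, c₂} : Finset V) ∈ E ∧ ({a₃, b₂, c₂} : Finset V) ∈ E)

instance W12.dec (E : Finset (Finset V)) (b₁ b₂ c₁ c₂ a₁ a₂ a₃ : V) :
    Decidable (W12 E b₁ b₂ c₁ c₂ a₁ a₂ a₃) := by unfold W12; infer_instance

def qf (E : Finset (Finset V)) (b₁ b₂ c₁ c₂ a : V) : ℝ :=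
  find3 E a b₁ c₁ * find3 E a b₂ c₁ * (find3 E a b₁ c₂ * find3 E a b₂ c₂)

lemma qf_nonneg (E : Finset (Finset V)) (b₁ b₂ c₁ c₂ a : V) : 0 ≤ qf E b₁ b₂ c₁ c₂ a := by
  unfold qf
  have := find3_nonneg E a b₁ c₁
  have := find3_nonneg E a b₂ c₁
  have := find3_nonneg E a b₁ c₂
  have := find3_nonneg E a b₂ c₂
  positivity

lemma q3_le_boole (E : Finset (Finset V)) (b₁ b₂ c₁ c₂ a₁ a₂ a₃ : V) :
    qf E b₁ b₂ c₁ c₂ a₁ * qf E b₁ b₂ c₁ c₂ a₂ * qf E b₁ b₂ c₁ c₂ a₃ ≤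
      (if W12 E b₁ b₂ c₁ c₂ a₁ a₂ a₃ then (1 : ℝ) else 0) := by
  by_cases h : W12 E b₁ b₂ c₁ c₂ a₁ a₂ a₃
  · rw [if_pos h]
    obtain ⟨⟨h1, h2, h3, h4⟩, ⟨h5, h6, h7, h8⟩, ⟨h9, h10, h11, h12⟩⟩ := h
    simp [qf, find3, h1, h2, h3, h4, h5, h6, h7, h8, h9, h10, h11, h12]
  · rw [if_neg h]
    unfold W12 at h
    simp only [not_and_or] at h
    rcases h with (h | h | h | h) | (h | h | h | h) | (h | h | h | h) <;>
      simp [qf, find3, h]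

lemma theta_count [Nonempty V] (E : Finset (Finset V)) (hE3 : ∀ e ∈ E, e.card = 3) :
    ((E.card : ℝ)) ^ 12 ≤ ((Fintype.card V : ℝ)) ^ 29 *
      ((Finset.univ.filter fun t : V × V × V × V × V × V × V =>
        W12 E t.1 t.2.1 t.2.2.1 t.2.2.2.1 t.2.2.2.2.1 t.2.2.2.2.2.1 t.2.2.2.2.2.2).card) := by
  classical
  set n : ℝ := (Fintype.card V : ℝ) with hn
  have hn0 : (0 : ℝ) ≤ n := Nat.cast_nonneg _
  set d : V → ℝ := fun a => ∑ b : V, ∑ c : V, find3 E a b c with hd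
  set cross : V → V × V → ℝ := fun a p => ∑ c : V, find3 E a p.1 c * find3 E a p.2 c with hcross
  set kk : V → ℝ := fun a => ∑ p : V × V, (cross a p) ^ 2 with hkk
  have hd0 : ∀ a, 0 ≤ d a := fun a =>
    Finset.sum_nonneg fun b _ => Finset.sum_nonneg fun c _ => find3_nonneg E a b c
  have hcross0 : ∀ a p, 0 ≤ cross a p := fun a p =>
    Finset.sum_nonneg fun c _ => mul_nonneg (find3_nonneg _ _ _ _) (find3_nonneg _ _ _ _)
  have hkk0 : ∀ a, 0 ≤ kk a := fun a => Finset.sum_nonneg fun p _ => sq_nonneg _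
  -- Step A : edge count below the full sum
  have hcount : ∑ a : V, d a = ((Finset.univ.filter fun t : V × V × V =>
      ({t.1, t.2.1, t.2.2} : Finset V) ∈ E).card : ℝ) := by
    rw [← Finset.sum_boole]
    simp only [Fintype.sum_prod_type]
    rfl
  have hA : (E.card : ℝ) ≤ ∑ a : V, d a := by
    rw [hcount]
    have hch : ∀ e : Finset V, e ∈ E → ∃ t : V × V × V,
        ({t.1, t.2.1, t.2.2} : Finset V) = e := by
      intro e he
      obtain ⟨x, y, z, _, _, _, rfl⟩ := Finset.card_eq_three.1 (hE3 e he)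
      exact ⟨(x, y, z), rfl⟩
    have v0 : V := Classical.arbitrary V
    have hinj : E.card ≤ (Finset.univ.filter fun t : V × V × V =>
        ({t.1, t.2.1, t.2.2} : Finset V) ∈ E).card := by
      apply Finset.card_le_card_of_injOn (fun e =>
        if h : ∃ t : V × V × V, ({t.1, t.2.1, t.2.2} : Finset V) = e then h.choose
        else (v0, v0, v0))
      · intro e he
        dsimp only
        rw [dif_pos (hch e he)]
        simp only [Finset.mem_coe, Finset.mem_filter, Finset.mem_univ, true_and]
        rw [(hch e he).choose_spec]
        exact he
      · intro e he f hf hef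
        simp only [Finset.mem_coe] at he hf
        dsimp only at hef
        rw [dif_pos (hch e he), dif_pos (hch f hf)] at hef
        rw [← (hch e he).choose_spec, ← (hch f hf).choose_spec, hef]
    exact_mod_cast hinj
  -- Step 1 : per-a Cauchy-Schwarz
  have h1 : ∀ a : V, (d a) ^ 2 ≤ n * ∑ p : V × V, cross a p := by
    intro a
    have hswap : d a = ∑ c : V, ∑ b : V, find3 E a b c := by
      rw [hd]; exact Finset.sum_comm
    have hpm : (∑ c : V, ∑ b : V, find3 E a b c) ^ 2 ≤
        n * ∑ c : V, (∑ b : V, find3 E a b c) ^ 2 := by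
      have hh := pow_sum_le_card_mul_sum_pow (s := (univ : Finset V))
        (f := fun c => ∑ b : V, find3 E a b c)
        (fun c _ => Finset.sum_nonneg fun b _ => find3_nonneg E a b c) 1
      rw [hn]
      simpa using hh
    have hre : ∑ c : V, (∑ b : V, find3 E a b c) ^ 2 = ∑ p : V × V, cross a p := by
      calc ∑ c : V, (∑ b : V, find3 E a b c) ^ 2
          = ∑ c : V, ∑ b₁ : V, ∑ b₂ : V, find3 E a b₁ c * find3 E a b₂ c := by
            refine Finset.sum_congr rfl fun c _ => ?_
            rw [sq, Finset.sum_mul_sum]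
        _ = ∑ b₁ : V, ∑ c : V, ∑ b₂ : V, find3 E a b₁ c * find3 E a b₂ c :=
            Finset.sum_comm
        _ = ∑ b₁ : V, ∑ b₂ : V, ∑ c : V, find3 E a b₁ c * find3 E a b₂ c :=
            Finset.sum_congr rfl fun b₁ _ => Finset.sum_comm
        _ = ∑ p : V × V, cross a p := by
            rw [Fintype.sum_prod_type]
    calc (d a) ^ 2 = (∑ c : V, ∑ b : V, find3 E a b c) ^ 2 := by rw [hswap]
      _ ≤ n * ∑ c : V, (∑ b : V, find3 E a b c) ^ 2 := hpm
      _ = n * ∑ p : V × V, cross a p := by rw [hre]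
  -- Step 2
  have h2 : ∀ a : V, (∑ p : V × V, cross a p) ^ 2 ≤ n ^ 2 * kk a := by
    intro a
    have hh := pow_sum_le_card_mul_sum_pow (s := (univ : Finset (V × V))) (f := cross a)
      (fun p _ => hcross0 a p) 1
    have hcd : ((#(univ : Finset (V × V)) : ℕ) : ℝ) = n ^ 2 := by
      rw [Finset.card_univ, Fintype.card_prod, hn]
      push_cast
      ring
    calc (∑ p : V × V, cross a p) ^ 2
        ≤ ((#(univ : Finset (V × V)) : ℕ) : ℝ) ^ 1 * ∑ p : V × V, (cross a p) ^ 2 := hh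
      _ = n ^ 2 * kk a := by rw [hcd, pow_one, hkk]
  have h3 : ∀ a : V, (d a) ^ 4 ≤ n ^ 4 * kk a := by
    intro a
    calc (d a) ^ 4 = ((d a) ^ 2) ^ 2 := by ring
      _ ≤ (n * ∑ p : V × V, cross a p) ^ 2 := by
          apply pow_le_pow_left₀ (sq_nonneg _) (h1 a)
      _ = n ^ 2 * (∑ p : V × V, cross a p) ^ 2 := by ring
      _ ≤ n ^ 2 * (n ^ 2 * kk a) := by
          apply mul_le_mul_of_nonneg_left (h2 a) (by positivity)
      _ = n ^ 4 * kk a := by ring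
  have h4 : (∑ a : V, d a) ^ 4 ≤ n ^ 3 * ∑ a : V, (d a) ^ 4 := by
    have := pow_sum_le_card_mul_sum_pow (s := (univ : Finset V)) (f := d)
      (fun i _ => hd0 i) 3
    simpa using this
  have h5 : (∑ a : V, d a) ^ 4 ≤ n ^ 7 * ∑ a : V, kk a := by
    calc (∑ a : V, d a) ^ 4 ≤ n ^ 3 * ∑ a : V, (d a) ^ 4 := h4
      _ ≤ n ^ 3 * ∑ a : V, (n ^ 4 * kk a) := by
          apply mul_le_mul_of_nonneg_left (Finset.sum_le_sum fun a _ => h3 a) (by positivity)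
      _ = n ^ 7 * ∑ a : V, kk a := by rw [← Finset.mul_sum]; ring
  -- Step 6 : Fubini to the 4-tuple sums
  set g4 : (V × V) × (V × V) → ℝ := fun p4 => ∑ a : V, qf E p4.1.1 p4.1.2 p4.2.1 p4.2.2 a
    with hg4
  have hg40 : ∀ p4, 0 ≤ g4 p4 := fun p4 => Finset.sum_nonneg fun a _ => qf_nonneg _ _ _ _ _ _
  have h6 : ∑ a : V, kk a = ∑ p4 : (V × V) × (V × V), g4 p4 := by
    have hka : ∀ a : V, kk a = ∑ pb : V × V, ∑ pc : V × V, qf E pb.1 pb.2 pc.1 pc.2 a := by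
      intro a
      rw [hkk]
      refine Finset.sum_congr rfl fun pb _ => ?_
      rw [sq, hcross, Finset.sum_mul_sum]
      rw [show (∑ pc : V × V, qf E pb.1 pb.2 pc.1 pc.2 a)
          = ∑ c₁ : V, ∑ c₂ : V, qf E pb.1 pb.2 c₁ c₂ a from Fintype.sum_prod_type _]
      rfl
    calc ∑ a : V, kk a
        = ∑ a : V, ∑ pb : V × V, ∑ pc : V × V, qf E pb.1 pb.2 pc.1 pc.2 a :=
          Finset.sum_congr rfl fun a _ => hka a
      _ = ∑ pb : V × V, ∑ a : V, ∑ pc : V × V, qf E pb.1 pb.2 pc.1 pc.2 a :=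
          Finset.sum_comm
      _ = ∑ pb : V × V, ∑ pc : V × V, ∑ a : V, qf E pb.1 pb.2 pc.1 pc.2 a :=
          Finset.sum_congr rfl fun pb _ => Finset.sum_comm
      _ = ∑ p4 : (V × V) × (V × V), g4 p4 := by
          simp only [Fintype.sum_prod_type, hg4]
  have h7 : (∑ p4 : (V × V) × (V × V), g4 p4) ^ 3 ≤
      (n ^ 4) ^ 2 * ∑ p4 : (V × V) × (V × V), (g4 p4) ^ 3 := by
    have := pow_sum_le_card_mul_sum_pow (s := (univ : Finset ((V × V) × (V × V)))) (f := g4)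
      (fun i _ => hg40 i) 2
    have hcd : ((univ : Finset ((V × V) × (V × V))).card : ℝ) = n ^ 4 := by
      simp [Finset.card_univ, hn]
      push_cast
      ring
    rwa [hcd] at this
  -- Step 7 : compare with the count of good tuples
  have h9 : ∑ p4 : (V × V) × (V × V), (g4 p4) ^ 3 ≤
      (((Finset.univ.filter fun t : V × V × V × V × V × V × V =>
        W12 E t.1 t.2.1 t.2.2.1 t.2.2.2.1 t.2.2.2.2.1 t.2.2.2.2.2.1 t.2.2.2.2.2.2).card : ℝ)) := by
    have h8 : ∀ b₁ b₂ c₁ c₂ : V, (g4 ((b₁, b₂), (c₁, c₂))) ^ 3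
        = ∑ a₁ : V, ∑ a₂ : V, ∑ a₃ : V,
            qf E b₁ b₂ c₁ c₂ a₁ * qf E b₁ b₂ c₁ c₂ a₂ * qf E b₁ b₂ c₁ c₂ a₃ := by
      intro b₁ b₂ c₁ c₂
      rw [hg4]
      calc (∑ a : V, qf E b₁ b₂ c₁ c₂ a) ^ 3
          = (∑ a₁ : V, qf E b₁ b₂ c₁ c₂ a₁) *
            ((∑ a₂ : V, qf E b₁ b₂ c₁ c₂ a₂) * (∑ a₃ : V, qf E b₁ b₂ c₁ c₂ a₃)) := by ring
        _ = (∑ a₁ : V, qf E b₁ b₂ c₁ c₂ a₁) *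
            (∑ a₂ : V, ∑ a₃ : V, qf E b₁ b₂ c₁ c₂ a₂ * qf E b₁ b₂ c₁ c₂ a₃) := by
              rw [Finset.sum_mul_sum]
        _ = ∑ a₁ : V, ∑ a₂ : V, ∑ a₃ : V,
              qf E b₁ b₂ c₁ c₂ a₁ * qf E b₁ b₂ c₁ c₂ a₂ * qf E b₁ b₂ c₁ c₂ a₃ := by
              rw [Finset.sum_mul_sum]
              refine Finset.sum_congr rfl fun a₁ _ => ?_
              refine Finset.sum_congr rfl fun a₂ _ => ?_
              rw [Finset.mul_sum]
              refine Finset.sum_congr rfl fun a₃ _ => ?_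
              ring
    have hcard : (((Finset.univ.filter fun t : V × V × V × V × V × V × V =>
        W12 E t.1 t.2.1 t.2.2.1 t.2.2.2.1 t.2.2.2.2.1 t.2.2.2.2.2.1 t.2.2.2.2.2.2).card : ℕ) : ℝ)
        = ∑ b₁ : V, ∑ b₂ : V, ∑ c₁ : V, ∑ c₂ : V, ∑ a₁ : V, ∑ a₂ : V, ∑ a₃ : V,
            (if W12 E b₁ b₂ c₁ c₂ a₁ a₂ a₃ then (1 : ℝ) else 0) := by
      rw [← Finset.sum_boole]
      simp only [Fintype.sum_prod_type]
    have hexpand : ∑ p4 : (V × V) × (V × V), (g4 p4) ^ 3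
        = ∑ b₁ : V, ∑ b₂ : V, ∑ c₁ : V, ∑ c₂ : V, (g4 ((b₁, b₂), (c₁, c₂))) ^ 3 := by
      simp only [Fintype.sum_prod_type]
    rw [hexpand, hcard]
    refine Finset.sum_le_sum fun b₁ _ => ?_
    refine Finset.sum_le_sum fun b₂ _ => ?_
    refine Finset.sum_le_sum fun c₁ _ => ?_
    refine Finset.sum_le_sum fun c₂ _ => ?_
    rw [h8]
    refine Finset.sum_le_sum fun a₁ _ => ?_
    refine Finset.sum_le_sum fun a₂ _ => ?_
    refine Finset.sum_le_sum fun a₃ _ => ?_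
    exact q3_le_boole E b₁ b₂ c₁ c₂ a₁ a₂ a₃
  -- assemble
  have hE0 : (0 : ℝ) ≤ (E.card : ℝ) := Nat.cast_nonneg _
  calc ((E.card : ℝ)) ^ 12 = (((E.card : ℝ)) ^ 4) ^ 3 := by ring
    _ ≤ ((∑ a : V, d a) ^ 4) ^ 3 := by
        apply pow_le_pow_left₀ (by positivity)
        apply pow_le_pow_left₀ hE0 hA
    _ ≤ (n ^ 7 * ∑ a : V, kk a) ^ 3 := by
        apply pow_le_pow_left₀ (by positivity) h5
    _ = n ^ 21 * (∑ p4 : (V × V) × (V × V), g4 p4) ^ 3 := by rw [h6]; ring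
    _ ≤ n ^ 21 * ((n ^ 4) ^ 2 * ∑ p4 : (V × V) × (V × V), (g4 p4) ^ 3) := by
        apply mul_le_mul_of_nonneg_left h7 (by positivity)
    _ ≤ n ^ 21 * ((n ^ 4) ^ 2 * _) := by
        apply mul_le_mul_of_nonneg_left (mul_le_mul_of_nonneg_left h9 (by positivity))
          (by positivity)
    _ = n ^ 29 * _ := by ring


def Dist5 (b₁ b₂ c₁ c₂ a₁ a₂ a₃ : V) : Prop :=
  b₁ ≠ b₂ ∧ c₁ ≠ c₂ ∧ a₁ ≠ a₂ ∧ a₁ ≠ a₃ ∧ a₂ ≠ a₃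

instance Dist5.dec (b₁ b₂ c₁ c₂ a₁ a₂ a₃ : V) :
    Decidable (Dist5 b₁ b₂ c₁ c₂ a₁ a₂ a₃) := by unfold Dist5; infer_instance

lemma proj_card_le [Nonempty V] (P : V × V × V × V × V × V × V → Prop) [DecidablePred P]
    (f : V × V × V × V × V × V × V → V × V × V × V × V × V)
    (hinj : ∀ t t', P t → P t' → f t = f t' → t = t') :
    (Finset.univ.filter P).card ≤ (Fintype.card V) ^ 6 := by
  calc (Finset.univ.filter P).card
      ≤ (Finset.univ : Finset (V × V × V × V × V × V)).card := by
        apply Finset.card_le_card_of_injOn f (fun t _ => Finset.mem_univ (f t))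
        intro t ht t' ht' heq
        rw [Finset.mem_coe, Finset.mem_filter] at ht ht'
        exact hinj t t' ht.2 ht'.2 heq
    _ = (Fintype.card V) ^ 6 := by
        rw [Finset.card_univ]
        simp only [Fintype.card_prod]
        ring

lemma clean_count [Nonempty V] (E : Finset (Finset V)) :
    ((Finset.univ.filter fun t : V × V × V × V × V × V × V =>
        W12 E t.1 t.2.1 t.2.2.1 t.2.2.2.1 t.2.2.2.2.1 t.2.2.2.2.2.1 t.2.2.2.2.2.2).card)
      ≤ (Finset.univ.filter fun t : V × V × V × V × V × V × V =>
          W12 E t.1 t.2.1 t.2.2.1 t.2.2.2.1 t.2.2.2.2.1 t.2.2.2.2.2.1 t.2.2.2.2.2.2 ∧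
          Dist5 t.1 t.2.1 t.2.2.1 t.2.2.2.1 t.2.2.2.2.1 t.2.2.2.2.2.1 t.2.2.2.2.2.2).card
        + 5 * (Fintype.card V) ^ 6 := by
  have hsub : (Finset.univ.filter fun t : V × V × V × V × V × V × V =>
      W12 E t.1 t.2.1 t.2.2.1 t.2.2.2.1 t.2.2.2.2.1 t.2.2.2.2.2.1 t.2.2.2.2.2.2) ⊆
      (Finset.univ.filter fun t : V × V × V × V × V × V × V =>
          W12 E t.1 t.2.1 t.2.2.1 t.2.2.2.1 t.2.2.2.2.1 t.2.2.2.2.2.1 t.2.2.2.2.2.2 ∧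
          Dist5 t.1 t.2.1 t.2.2.1 t.2.2.2.1 t.2.2.2.2.1 t.2.2.2.2.2.1 t.2.2.2.2.2.2) ∪
        ((Finset.univ.filter fun t : V × V × V × V × V × V × V => t.1 = t.2.1) ∪
         (Finset.univ.filter fun t : V × V × V × V × V × V × V => t.2.2.1 = t.2.2.2.1) ∪
         (Finset.univ.filter fun t : V × V × V × V × V × V × V => t.2.2.2.2.1 = t.2.2.2.2.2.1) ∪
         (Finset.univ.filter fun t : V × V × V × V × V × V × V => t.2.2.2.2.1 = t.2.2.2.2.2.2) ∪
         (Finset.univ.filter fun t : V × V × V × V × V × V × V => t.2.2.2.2.2.1 = t.2.2.2.2.2.2)) := by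
    intro t ht
    rw [Finset.mem_filter] at ht
    by_cases hD : Dist5 t.1 t.2.1 t.2.2.1 t.2.2.2.1 t.2.2.2.2.1 t.2.2.2.2.2.1 t.2.2.2.2.2.2
    · exact Finset.mem_union_left _ (Finset.mem_filter.2 ⟨ht.1, ht.2, hD⟩)
    · apply Finset.mem_union_right
      unfold Dist5 at hD
      simp only [not_and_or, not_not, ne_eq] at hD
      simp only [Finset.mem_union, Finset.mem_filter, Finset.mem_univ, true_and]
      tauto
  have hb1 : (Finset.univ.filter fun t : V × V × V × V × V × V × V => t.1 = t.2.1).card ≤ (Fintype.card V) ^ 6 := by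
    apply proj_card_le _ (fun t => (t.1, t.2.2))
    rintro ⟨b₁, b₂, r⟩ ⟨b₁', b₂', r'⟩ ht ht' heq
    simp only [Prod.mk.injEq] at ht ht' heq ⊢
    exact ⟨heq.1, by rw [← ht, ← ht', heq.1], heq.2⟩
  have hb2 : (Finset.univ.filter fun t : V × V × V × V × V × V × V => t.2.2.1 = t.2.2.2.1).card
      ≤ (Fintype.card V) ^ 6 := by
    apply proj_card_le _ (fun t => (t.1, t.2.1, t.2.2.1, t.2.2.2.2))
    rintro ⟨b₁, b₂, c₁, c₂, r⟩ ⟨b₁', b₂', c₁', c₂', r'⟩ ht ht' heq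
    simp only [Prod.mk.injEq] at ht ht' heq ⊢
    refine ⟨heq.1, heq.2.1, heq.2.2.1, ?_, heq.2.2.2⟩
    rw [← ht, ← ht', heq.2.2.1]
  have hb3 : (Finset.univ.filter fun t : V × V × V × V × V × V × V => t.2.2.2.2.1 = t.2.2.2.2.2.1).card
      ≤ (Fintype.card V) ^ 6 := by
    apply proj_card_le _ (fun t => (t.1, t.2.1, t.2.2.1, t.2.2.2.1, t.2.2.2.2.1,
      t.2.2.2.2.2.2))
    rintro ⟨b₁, b₂, c₁, c₂, a₁, a₂, a₃⟩ ⟨b₁', b₂', c₁', c₂', a₁', a₂', a₃'⟩ ht ht' heq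
    simp only [Prod.mk.injEq] at ht ht' heq ⊢
    refine ⟨heq.1, heq.2.1, heq.2.2.1, heq.2.2.2.1, heq.2.2.2.2.1, ?_, heq.2.2.2.2.2⟩
    rw [← ht, ← ht', heq.2.2.2.2.1]
  have hb4 : (Finset.univ.filter fun t : V × V × V × V × V × V × V => t.2.2.2.2.1 = t.2.2.2.2.2.2).card
      ≤ (Fintype.card V) ^ 6 := by
    apply proj_card_le _ (fun t => (t.1, t.2.1, t.2.2.1, t.2.2.2.1, t.2.2.2.2.1,
      t.2.2.2.2.2.1))
    rintro ⟨b₁, b₂, c₁, c₂, a₁, a₂, a₃⟩ ⟨b₁', b₂', c₁', c₂', a₁', a₂', a₃'⟩ ht ht' heq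
    simp only [Prod.mk.injEq] at ht ht' heq ⊢
    refine ⟨heq.1, heq.2.1, heq.2.2.1, heq.2.2.2.1, heq.2.2.2.2.1, heq.2.2.2.2.2, ?_⟩
    rw [← ht, ← ht', heq.2.2.2.2.1]
  have hb5 : (Finset.univ.filter fun t : V × V × V × V × V × V × V => t.2.2.2.2.2.1 = t.2.2.2.2.2.2).card
      ≤ (Fintype.card V) ^ 6 := by
    apply proj_card_le _ (fun t => (t.1, t.2.1, t.2.2.1, t.2.2.2.1, t.2.2.2.2.1,
      t.2.2.2.2.2.1))
    rintro ⟨b₁, b₂, c₁, c₂, a₁, a₂, a₃⟩ ⟨b₁', b₂', c₁', c₂', a₁', a₂', a₃'⟩ ht ht' heq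
    simp only [Prod.mk.injEq] at ht ht' heq ⊢
    refine ⟨heq.1, heq.2.1, heq.2.2.1, heq.2.2.2.1, heq.2.2.2.2.1, heq.2.2.2.2.2, ?_⟩
    rw [← ht, ← ht', heq.2.2.2.2.2]
  calc (Finset.univ.filter fun t : V × V × V × V × V × V × V =>
      W12 E t.1 t.2.1 t.2.2.1 t.2.2.2.1 t.2.2.2.2.1 t.2.2.2.2.2.1 t.2.2.2.2.2.2).card
      ≤ _ := Finset.card_le_card hsub
    _ ≤ (Finset.univ.filter fun t : V × V × V × V × V × V × V =>
          W12 E t.1 t.2.1 t.2.2.1 t.2.2.2.1 t.2.2.2.2.1 t.2.2.2.2.2.1 t.2.2.2.2.2.2 ∧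
          Dist5 t.1 t.2.1 t.2.2.1 t.2.2.2.1 t.2.2.2.2.1 t.2.2.2.2.2.1 t.2.2.2.2.2.2).card
        + ((Finset.univ.filter fun t : V × V × V × V × V × V × V => t.1 = t.2.1) ∪
         (Finset.univ.filter fun t : V × V × V × V × V × V × V => t.2.2.1 = t.2.2.2.1) ∪
         (Finset.univ.filter fun t : V × V × V × V × V × V × V => t.2.2.2.2.1 = t.2.2.2.2.2.1) ∪
         (Finset.univ.filter fun t : V × V × V × V × V × V × V => t.2.2.2.2.1 = t.2.2.2.2.2.2) ∪
         (Finset.univ.filter fun t : V × V × V × V × V × V × V => t.2.2.2.2.2.1 = t.2.2.2.2.2.2)).card :=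
        Finset.card_union_le _ _
    _ ≤ _ := by
        have h4 := Finset.card_union_le
          ((Finset.univ.filter fun t : V × V × V × V × V × V × V => t.1 = t.2.1) ∪
           (Finset.univ.filter fun t : V × V × V × V × V × V × V => t.2.2.1 = t.2.2.2.1) ∪
           (Finset.univ.filter fun t : V × V × V × V × V × V × V => t.2.2.2.2.1 = t.2.2.2.2.2.1) ∪
           (Finset.univ.filter fun t : V × V × V × V × V × V × V => t.2.2.2.2.1 = t.2.2.2.2.2.2))
          (Finset.univ.filter fun t : V × V × V × V × V × V × V => t.2.2.2.2.2.1 = t.2.2.2.2.2.2)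
        have h3 := Finset.card_union_le
          ((Finset.univ.filter fun t : V × V × V × V × V × V × V => t.1 = t.2.1) ∪
           (Finset.univ.filter fun t : V × V × V × V × V × V × V => t.2.2.1 = t.2.2.2.1) ∪
           (Finset.univ.filter fun t : V × V × V × V × V × V × V => t.2.2.2.2.1 = t.2.2.2.2.2.1))
          (Finset.univ.filter fun t : V × V × V × V × V × V × V => t.2.2.2.2.1 = t.2.2.2.2.2.2)
        have h2 := Finset.card_union_le
          ((Finset.univ.filter fun t : V × V × V × V × V × V × V => t.1 = t.2.1) ∪
           (Finset.univ.filter fun t : V × V × V × V × V × V × V => t.2.2.1 = t.2.2.2.1))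
          (Finset.univ.filter fun t : V × V × V × V × V × V × V => t.2.2.2.2.1 = t.2.2.2.2.2.1)
        have h1 := Finset.card_union_le
          (Finset.univ.filter fun t : V × V × V × V × V × V × V => t.1 = t.2.1)
          (Finset.univ.filter fun t : V × V × V × V × V × V × V => t.2.2.1 = t.2.2.2.1)
        omega

end ThetaCount


section BuildAbsorber

variable {V : Type*} [DecidableEq V] [Fintype V]

/-- The witness set for `(β,2)`-reachability. -/
def RWset (H : Finset (Finset V)) (u v : V) : Set (Finset V) :=
  {T : Finset V | T.card = 5 * 2 - 1 ∧
    ∃ Ps Qs : List (List V), Ps.length = 2 ∧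
      (∀ P ∈ Ps, IsTightPath H P ∧ P.length = 5) ∧
      (∀ Q ∈ Qs, IsTightPath H Q ∧ Q.length = 5) ∧
      Ps.Pairwise (fun P P' => Disjoint P.toFinset P'.toFinset) ∧
      Qs.Pairwise (fun Q Q' => Disjoint Q.toFinset Q'.toFinset) ∧
      famVerts Ps = insert u T ∧ famVerts Qs = insert v T ∧
      SameEndsList Ps Qs}

lemma reachable_two (H : Finset (Finset V)) {β : ℝ} {u v : V} (h : Reachable H β 2 u v) :
    β * (Fintype.card V : ℝ) ^ 9 ≤ ((RWset H u v).ncard : ℝ) := by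
  unfold Reachable at h
  exact h

noncomputable def RWfin (H : Finset (Finset V)) (u v : V) : Finset (Finset V) :=
  (RWset H u v).toFinite.toFinset

lemma RWfin_mem {H : Finset (Finset V)} {u v : V} {T : Finset V} :
    T ∈ RWfin H u v ↔ T ∈ RWset H u v := Set.Finite.mem_toFinset _

lemma RWfin_card (H : Finset (Finset V)) {β : ℝ} {u v : V} (h : Reachable H β 2 u v) :
    β * (Fintype.card V : ℝ) ^ 9 ≤ ((RWfin H u v).card : ℝ) := by
  have h2 := reachable_two H h
  rwa [Set.ncard_eq_toFinset_card (RWset H u v) (RWset H u v).toFinite] at h2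

lemma RWset_card9 {H : Finset (Finset V)} {u v : V} {T : Finset V} (h : T ∈ RWset H u v) :
    T.card = 9 := h.1

lemma famVerts_pair (P Q : List V) :
    famVerts [P, Q] = P.toFinset ∪ Q.toFinset := by
  rw [famVerts_cons, famVerts_cons, famVerts_nil, Finset.union_empty]

lemma triple_distinct {V : Type*} [DecidableEq V] {x y z : V}
    (h : ({x, y, z} : Finset V).card = 3) : x ≠ y ∧ x ≠ z ∧ y ≠ z := by
  refine ⟨?_, ?_, ?_⟩ <;> rintro rfl
  · have hsub : ({x, x, z} : Finset V) ⊆ {x, z} := by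
      intro a ha; simp at ha ⊢; tauto
    have h1 := Finset.card_le_card hsub
    have h2 := Finset.card_insert_le x ({z} : Finset V)
    rw [h] at h1
    simp at h2
    omega
  · have hsub : ({x, y, x} : Finset V) ⊆ {x, y} := by
      intro a ha; simp at ha ⊢; tauto
    have h1 := Finset.card_le_card hsub
    have h2 := Finset.card_insert_le x ({y} : Finset V)
    rw [h] at h1
    simp at h2
    omega
  · have hsub : ({x, y, y} : Finset V) ⊆ {x, y} := by
      intro a ha; simp at ha ⊢; tauto
    have h1 := Finset.card_le_card hsub
    have h2 := Finset.card_insert_le x ({y} : Finset V)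
    rw [h] at h1
    simp at h2
    omega

lemma card7_le {V : Type*} [DecidableEq V] (x1 x2 x3 x4 x5 x6 x7 : V) :
    ({x1, x2, x3, x4, x5, x6, x7} : Finset V).card ≤ 7 := by
  have heq : ({x1, x2, x3, x4, x5, x6, x7} : Finset V) =
      ([x1, x2, x3, x4, x5, x6, x7] : List V).toFinset := by simp
  rw [heq]
  exact le_trans (List.toFinset_card_le _) (by simp)

lemma union_shuffle (W T₁ T₂ T₃ : Finset V) (s₁ s₂ s₃ : V) :
    (insert s₁ T₁) ∪ ((insert s₂ T₂) ∪ ((insert s₃ T₃) ∪ W)) =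
    (W ∪ (T₁ ∪ (T₂ ∪ T₃))) ∪ {s₁, s₂, s₃} := by
  ext x
  simp only [Finset.mem_union, Finset.mem_insert, Finset.mem_singleton]
  tauto

lemma build_absorber (H : Finset (Finset V)) (S : Finset V)
    (a₁ b₁ c₁ a₂ b₂ c₂ a₃ s₁ s₂ s₃ : V) (T₁ T₂ T₃ : Finset V)
    (hw1 : ({a₁, b₁, c₁} : Finset V) ∈ H)
    (hw2 : ({b₁, c₁, a₂} : Finset V) ∈ H)
    (hw3 : ({c₁, a₂, b₂} : Finset V) ∈ H)
    (hw4 : ({a₂, b₂, c₂} : Finset V) ∈ H)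
    (hw5 : ({b₂, c₂, a₃} : Finset V) ∈ H)
    (hw6 : ({a₁, b₁, c₂} : Finset V) ∈ H)
    (hw7 : ({b₁, c₂, a₃} : Finset V) ∈ H)
    (hnd : ([a₁, b₁, c₁, a₂, b₂, c₂, a₃] : List V).Nodup)
    (hSeq : S = {s₁, s₂, s₃}) (hs12 : s₁ ≠ s₂) (hs13 : s₁ ≠ s₃) (hs23 : s₂ ≠ s₃)
    (hT1 : T₁ ∈ RWset H c₁ s₁) (hT2 : T₂ ∈ RWset H a₂ s₂) (hT3 : T₃ ∈ RWset H b₂ s₃)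
    (hd1 : Disjoint T₁ (({a₁, b₁, c₁, a₂, b₂, c₂, a₃} : Finset V) ∪ S))
    (hd2 : Disjoint T₂ (({a₁, b₁, c₁, a₂, b₂, c₂, a₃} : Finset V) ∪ S ∪ T₁))
    (hd3 : Disjoint T₃ (({a₁, b₁, c₁, a₂, b₂, c₂, a₃} : Finset V) ∪ S ∪ T₁ ∪ T₂))
    (hvS : Disjoint ({a₁, b₁, c₁, a₂, b₂, c₂, a₃} : Finset V) S) :
    Disjoint (({a₁, b₁, c₁, a₂, b₂, c₂, a₃} : Finset V) ∪ (T₁ ∪ (T₂ ∪ T₃))) S ∧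
    (({a₁, b₁, c₁, a₂, b₂, c₂, a₃} : Finset V) ∪ (T₁ ∪ (T₂ ∪ T₃))).card = 34 ∧
    ∃ Ps : List (List V), Ps.length = 7 ∧ IsAbsorber H S Ps ∧
      famVerts Ps = ({a₁, b₁, c₁, a₂, b₂, c₂, a₃} : Finset V) ∪ (T₁ ∪ (T₂ ∪ T₃)) := by
  classical
  -- pairwise distinctness of the seven special vertices
  have hnd' := hnd
  simp only [List.nodup_cons, List.mem_cons, List.not_mem_nil, or_false, not_or,
    List.nodup_nil, and_true] at hnd'
  obtain ⟨⟨h12, h13, h14, h15, h16, h17⟩, ⟨h23, h24, h25, h26, h27⟩,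
    ⟨h34, h35, h36, h37⟩, ⟨h45, h46, h47⟩, ⟨h56, h57⟩, h67, -⟩ := hnd'
  -- decompose the avoidance hypotheses
  rw [Finset.disjoint_union_right] at hd1
  rw [Finset.disjoint_union_right, Finset.disjoint_union_right] at hd2
  rw [Finset.disjoint_union_right, Finset.disjoint_union_right,
    Finset.disjoint_union_right] at hd3
  obtain ⟨hT1W, hT1S⟩ := hd1
  obtain ⟨⟨hT2W, hT2S⟩, hT21⟩ := hd2
  obtain ⟨⟨⟨hT3W, hT3S⟩, hT31⟩, hT32⟩ := hd3
  -- basic membership consequences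
  have hW : ∀ x : V, x ∈ ({a₁, b₁, c₁, a₂, b₂, c₂, a₃} : Finset V) ↔
      (x = a₁ ∨ x = b₁ ∨ x = c₁ ∨ x = a₂ ∨ x = b₂ ∨ x = c₂ ∨ x = a₃) := by
    intro x; simp
  have hSmem : ∀ x : V, x ∈ S ↔ (x = s₁ ∨ x = s₂ ∨ x = s₃) := by
    intro x; rw [hSeq]; simp
  -- witnesses
  obtain ⟨hT1c, Ps1, Qs1, hlen1, hP1, hQ1, hPd1, hQd1, hPf1, hQf1, hE1⟩ := hT1
  obtain ⟨hT2c, Ps2, Qs2, hlen2, hP2, hQ2, hPd2, hQd2, hPf2, hQf2, hE2⟩ := hT2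
  obtain ⟨hT3c, Ps3, Qs3, hlen3, hP3, hQ3, hPd3, hQd3, hPf3, hQf3, hE3w⟩ := hT3
  obtain ⟨P1, P2, rfl⟩ := List.length_eq_two.1 hlen1
  obtain ⟨P3, P4, rfl⟩ := List.length_eq_two.1 hlen2
  obtain ⟨P5, P6, rfl⟩ := List.length_eq_two.1 hlen3
  obtain ⟨Q1, Q2, rfl⟩ := List.length_eq_two.1 (by simpa using hE1.1.symm)
  obtain ⟨Q3, Q4, rfl⟩ := List.length_eq_two.1 (by simpa using hE2.1.symm)
  obtain ⟨Q5, Q6, rfl⟩ := List.length_eq_two.1 (by simpa using hE3w.1.symm)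
  -- vertex sets of the path pairs
  have hu1 : P1.toFinset ∪ P2.toFinset = insert c₁ T₁ := by
    rw [← famVerts_pair]; exact hPf1
  have hu2 : P3.toFinset ∪ P4.toFinset = insert a₂ T₂ := by
    rw [← famVerts_pair]; exact hPf2
  have hu3 : P5.toFinset ∪ P6.toFinset = insert b₂ T₃ := by
    rw [← famVerts_pair]; exact hPf3
  have hv1 : Q1.toFinset ∪ Q2.toFinset = insert s₁ T₁ := by
    rw [← famVerts_pair]; exact hQf1
  have hv2 : Q3.toFinset ∪ Q4.toFinset = insert s₂ T₂ := by
    rw [← famVerts_pair]; exact hQf2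
  have hv3 : Q5.toFinset ∪ Q6.toFinset = insert s₃ T₃ := by
    rw [← famVerts_pair]; exact hQf3
  -- tightness of the witness paths
  have htP1 : IsTightPath H P1 := (hP1 P1 (by simp)).1
  have htP2 : IsTightPath H P2 := (hP1 P2 (by simp)).1
  have htP3 : IsTightPath H P3 := (hP2 P3 (by simp)).1
  have htP4 : IsTightPath H P4 := (hP2 P4 (by simp)).1
  have htP5 : IsTightPath H P5 := (hP3 P5 (by simp)).1
  have htP6 : IsTightPath H P6 := (hP3 P6 (by simp)).1
  have htQ1 : IsTightPath H Q1 := (hQ1 Q1 (by simp)).1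
  have htQ2 : IsTightPath H Q2 := (hQ1 Q2 (by simp)).1
  have htQ3 : IsTightPath H Q3 := (hQ2 Q3 (by simp)).1
  have htQ4 : IsTightPath H Q4 := (hQ2 Q4 (by simp)).1
  have htQ5 : IsTightPath H Q5 := (hQ3 Q5 (by simp)).1
  have htQ6 : IsTightPath H Q6 := (hQ3 Q6 (by simp)).1
  -- disjointness within the witness pairs
  have hdP12 : Disjoint P1.toFinset P2.toFinset := by
    have := List.pairwise_cons.1 hPd1
    exact this.1 P2 (by simp)
  have hdP34 : Disjoint P3.toFinset P4.toFinset := by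
    have := List.pairwise_cons.1 hPd2
    exact this.1 P4 (by simp)
  have hdP56 : Disjoint P5.toFinset P6.toFinset := by
    have := List.pairwise_cons.1 hPd3
    exact this.1 P6 (by simp)
  have hdQ12 : Disjoint Q1.toFinset Q2.toFinset := by
    have := List.pairwise_cons.1 hQd1
    exact this.1 Q2 (by simp)
  have hdQ34 : Disjoint Q3.toFinset Q4.toFinset := by
    have := List.pairwise_cons.1 hQd2
    exact this.1 Q4 (by simp)
  have hdQ56 : Disjoint Q5.toFinset Q6.toFinset := by
    have := List.pairwise_cons.1 hQd3
    exact this.1 Q6 (by simp)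
  -- ends
  have hend1 : firstEnd P1 = firstEnd Q1 ∧ lastEnd P1 = lastEnd Q1 := by
    have := hE1.2 0 (by simp)
    simpa using this
  have hend2 : firstEnd P2 = firstEnd Q2 ∧ lastEnd P2 = lastEnd Q2 := by
    have := hE1.2 1 (by simp)
    simpa using this
  have hend3 : firstEnd P3 = firstEnd Q3 ∧ lastEnd P3 = lastEnd Q3 := by
    have := hE2.2 0 (by simp)
    simpa using this
  have hend4 : firstEnd P4 = firstEnd Q4 ∧ lastEnd P4 = lastEnd Q4 := by
    have := hE2.2 1 (by simp)
    simpa using this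
  have hend5 : firstEnd P5 = firstEnd Q5 ∧ lastEnd P5 = lastEnd Q5 := by
    have := hE3w.2 0 (by simp)
    simpa using this
  have hend6 : firstEnd P6 = firstEnd Q6 ∧ lastEnd P6 = lastEnd Q6 := by
    have := hE3w.2 1 (by simp)
    simpa using this
  -- membership consequences
  have hWnotT1 : ∀ x ∈ ({a₁, b₁, c₁, a₂, b₂, c₂, a₃} : Finset V), x ∉ T₁ :=
    fun x hx => Finset.disjoint_right.1 hT1W hx
  have hWnotT2 : ∀ x ∈ ({a₁, b₁, c₁, a₂, b₂, c₂, a₃} : Finset V), x ∉ T₂ :=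
    fun x hx => Finset.disjoint_right.1 hT2W hx
  have hWnotT3 : ∀ x ∈ ({a₁, b₁, c₁, a₂, b₂, c₂, a₃} : Finset V), x ∉ T₃ :=
    fun x hx => Finset.disjoint_right.1 hT3W hx
  have hSnotT1 : ∀ x ∈ S, x ∉ T₁ := fun x hx => Finset.disjoint_right.1 hT1S hx
  have hSnotT2 : ∀ x ∈ S, x ∉ T₂ := fun x hx => Finset.disjoint_right.1 hT2S hx
  have hSnotT3 : ∀ x ∈ S, x ∉ T₃ := fun x hx => Finset.disjoint_right.1 hT3S hx
  have hs1S : s₁ ∈ S := by rw [hSeq]; simp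
  have hs2S : s₂ ∈ S := by rw [hSeq]; simp
  have hs3S : s₃ ∈ S := by rw [hSeq]; simp
  -- master disjointness facts
  have hX12 : Disjoint (insert c₁ T₁) (insert a₂ T₂) :=
    disj_insert_insert h34 (hWnotT2 c₁ (by simp)) (hWnotT1 a₂ (by simp)) hT21.symm
  have hX13 : Disjoint (insert c₁ T₁) (insert b₂ T₃) :=
    disj_insert_insert h35 (hWnotT3 c₁ (by simp)) (hWnotT1 b₂ (by simp)) hT31.symm
  have hX23 : Disjoint (insert a₂ T₂) (insert b₂ T₃) :=
    disj_insert_insert h45 (hWnotT3 a₂ (by simp)) (hWnotT2 b₂ (by simp)) hT32.symm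
  have hY12 : Disjoint (insert s₁ T₁) (insert s₂ T₂) :=
    disj_insert_insert hs12 (hSnotT2 s₁ hs1S) (hSnotT1 s₂ hs2S) hT21.symm
  have hY13 : Disjoint (insert s₁ T₁) (insert s₃ T₃) :=
    disj_insert_insert hs13 (hSnotT3 s₁ hs1S) (hSnotT1 s₃ hs3S) hT31.symm
  have hY23 : Disjoint (insert s₂ T₂) (insert s₃ T₃) :=
    disj_insert_insert hs23 (hSnotT3 s₂ hs2S) (hSnotT2 s₃ hs3S) hT32.symm
  have hR4W : ({a₁, b₁, c₂, a₃} : Finset V) ⊆ ({a₁, b₁, c₁, a₂, b₂, c₂, a₃} : Finset V) := by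
    intro x hx; simp at hx ⊢; tauto
  have hX1R : Disjoint (insert c₁ T₁) ({a₁, b₁, c₂, a₃} : Finset V) := by
    rw [Finset.disjoint_insert_left]
    refine ⟨by simp [(Ne.symm h13), (Ne.symm h23), h36, h37], ?_⟩
    exact Finset.disjoint_of_subset_right hR4W hT1W
  have hX2R : Disjoint (insert a₂ T₂) ({a₁, b₁, c₂, a₃} : Finset V) := by
    rw [Finset.disjoint_insert_left]
    refine ⟨by simp [(Ne.symm h14), (Ne.symm h24), h46, h47], ?_⟩
    exact Finset.disjoint_of_subset_right hR4W hT2W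
  have hX3R : Disjoint (insert b₂ T₃) ({a₁, b₁, c₂, a₃} : Finset V) := by
    rw [Finset.disjoint_insert_left]
    refine ⟨by simp [(Ne.symm h15), (Ne.symm h25), h56, h57], ?_⟩
    exact Finset.disjoint_of_subset_right hR4W hT3W
  have hY1R : Disjoint (insert s₁ T₁) ({a₁, b₁, c₁, a₂, b₂, c₂, a₃} : Finset V) := by
    rw [Finset.disjoint_insert_left]
    exact ⟨Finset.disjoint_right.1 hvS hs1S, hT1W⟩
  have hY2R : Disjoint (insert s₂ T₂) ({a₁, b₁, c₁, a₂, b₂, c₂, a₃} : Finset V) := by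
    rw [Finset.disjoint_insert_left]
    exact ⟨Finset.disjoint_right.1 hvS hs2S, hT2W⟩
  have hY3R : Disjoint (insert s₃ T₃) ({a₁, b₁, c₁, a₂, b₂, c₂, a₃} : Finset V) := by
    rw [Finset.disjoint_insert_left]
    exact ⟨Finset.disjoint_right.1 hvS hs3S, hT3W⟩
  -- subset facts for the paths
  have hP1X : P1.toFinset ⊆ insert c₁ T₁ := by rw [← hu1]; exact Finset.subset_union_left
  have hP2X : P2.toFinset ⊆ insert c₁ T₁ := by rw [← hu1]; exact Finset.subset_union_right
  have hP3X : P3.toFinset ⊆ insert a₂ T₂ := by rw [← hu2]; exact Finset.subset_union_left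
  have hP4X : P4.toFinset ⊆ insert a₂ T₂ := by rw [← hu2]; exact Finset.subset_union_right
  have hP5X : P5.toFinset ⊆ insert b₂ T₃ := by rw [← hu3]; exact Finset.subset_union_left
  have hP6X : P6.toFinset ⊆ insert b₂ T₃ := by rw [← hu3]; exact Finset.subset_union_right
  have hQ1X : Q1.toFinset ⊆ insert s₁ T₁ := by rw [← hv1]; exact Finset.subset_union_left
  have hQ2X : Q2.toFinset ⊆ insert s₁ T₁ := by rw [← hv1]; exact Finset.subset_union_right
  have hQ3X : Q3.toFinset ⊆ insert s₂ T₂ := by rw [← hv2]; exact Finset.subset_union_left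
  have hQ4X : Q4.toFinset ⊆ insert s₂ T₂ := by rw [← hv2]; exact Finset.subset_union_right
  have hQ5X : Q5.toFinset ⊆ insert s₃ T₃ := by rw [← hv3]; exact Finset.subset_union_left
  have hQ6X : Q6.toFinset ⊆ insert s₃ T₃ := by rw [← hv3]; exact Finset.subset_union_right
  have hRX : ([a₁, b₁, c₂, a₃] : List V).toFinset ⊆ ({a₁, b₁, c₂, a₃} : Finset V) := by
    intro x hx; simpa using hx
  have hR'X : ([a₁, b₁, c₁, a₂, b₂, c₂, a₃] : List V).toFinset ⊆
      ({a₁, b₁, c₁, a₂, b₂, c₂, a₃} : Finset V) := by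
    intro x hx; simpa using hx
  have dss : ∀ {s t u w : Finset V}, s ⊆ t → u ⊆ w → Disjoint t w → Disjoint s u :=
    fun h1 h2 hd => Finset.disjoint_of_subset_left h1 (Finset.disjoint_of_subset_right h2 hd)
  -- tightness of the two special paths
  have htR : IsTightPath H ([a₁, b₁, c₂, a₃] : List V) := by
    constructor
    · simp only [List.nodup_cons, List.mem_cons, List.not_mem_nil, or_false, not_or,
        List.nodup_nil, and_true]
      exact ⟨⟨h12, h16, h17⟩, ⟨h26, h27⟩, h67, not_false⟩
    · intro i hi
      simp only [List.length_cons, List.length_nil] at hi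
      have hi2 : i < 2 := by omega
      interval_cases i
      · simpa using hw6
      · simpa using hw7
  have htR' : IsTightPath H ([a₁, b₁, c₁, a₂, b₂, c₂, a₃] : List V) := by
    constructor
    · exact hnd
    · intro i hi
      simp only [List.length_cons, List.length_nil] at hi
      have hi2 : i < 5 := by omega
      interval_cases i
      · simpa using hw1
      · simpa using hw2
      · simpa using hw3
      · simpa using hw4
      · simpa using hw5
  -- the vertex set identities
  have e1 : ∀ x : V, (x ∈ P1.toFinset ∨ x ∈ P2.toFinset) ↔ (x = c₁ ∨ x ∈ T₁) := by
    intro x; rw [← Finset.mem_union, hu1]; simp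
  have e2 : ∀ x : V, (x ∈ P3.toFinset ∨ x ∈ P4.toFinset) ↔ (x = a₂ ∨ x ∈ T₂) := by
    intro x; rw [← Finset.mem_union, hu2]; simp
  have e3 : ∀ x : V, (x ∈ P5.toFinset ∨ x ∈ P6.toFinset) ↔ (x = b₂ ∨ x ∈ T₃) := by
    intro x; rw [← Finset.mem_union, hu3]; simp
  have f1 : ∀ x : V, (x ∈ Q1.toFinset ∨ x ∈ Q2.toFinset) ↔ (x = s₁ ∨ x ∈ T₁) := by
    intro x; rw [← Finset.mem_union, hv1]; simp
  have f2 : ∀ x : V, (x ∈ Q3.toFinset ∨ x ∈ Q4.toFinset) ↔ (x = s₂ ∨ x ∈ T₂) := by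
    intro x; rw [← Finset.mem_union, hv2]; simp
  have f3 : ∀ x : V, (x ∈ Q5.toFinset ∨ x ∈ Q6.toFinset) ↔ (x = s₃ ∨ x ∈ T₃) := by
    intro x; rw [← Finset.mem_union, hv3]; simp
  have hRset : ([a₁, b₁, c₂, a₃] : List V).toFinset = ({a₁, b₁, c₂, a₃} : Finset V) := by
    simp
  have hR'set : ([a₁, b₁, c₁, a₂, b₂, c₂, a₃] : List V).toFinset =
      ({a₁, b₁, c₁, a₂, b₂, c₂, a₃} : Finset V) := by
    simp
  have hfamPs : famVerts [P1, P2, P3, P4, P5, P6, ([a₁, b₁, c₂, a₃] : List V)] =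
      ({a₁, b₁, c₁, a₂, b₂, c₂, a₃} : Finset V) ∪ (T₁ ∪ (T₂ ∪ T₃)) := by
    have hchain : famVerts [P1, P2, P3, P4, P5, P6, ([a₁, b₁, c₂, a₃] : List V)] =
        (P1.toFinset ∪ P2.toFinset) ∪ ((P3.toFinset ∪ P4.toFinset) ∪
          ((P5.toFinset ∪ P6.toFinset) ∪ ([a₁, b₁, c₂, a₃] : List V).toFinset)) := by
      simp only [famVerts_cons, famVerts_nil, Finset.union_empty, Finset.union_assoc]
    rw [hchain, hu1, hu2, hu3, hRset]
    ext x
    simp only [Finset.mem_union, Finset.mem_insert, Finset.mem_singleton]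
    tauto
  have hfamQs : famVerts [Q1, Q2, Q3, Q4, Q5, Q6, ([a₁, b₁, c₁, a₂, b₂, c₂, a₃] : List V)] =
      (({a₁, b₁, c₁, a₂, b₂, c₂, a₃} : Finset V) ∪ (T₁ ∪ (T₂ ∪ T₃))) ∪ S := by
    have hchain : famVerts [Q1, Q2, Q3, Q4, Q5, Q6, ([a₁, b₁, c₁, a₂, b₂, c₂, a₃] : List V)] =
        (Q1.toFinset ∪ Q2.toFinset) ∪ ((Q3.toFinset ∪ Q4.toFinset) ∪
          ((Q5.toFinset ∪ Q6.toFinset) ∪ ([a₁, b₁, c₁, a₂, b₂, c₂, a₃] : List V).toFinset)) := by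
      simp only [famVerts_cons, famVerts_nil, Finset.union_empty, Finset.union_assoc]
    rw [hchain, hv1, hv2, hv3, hR'set, hSeq]
    exact union_shuffle _ _ _ _ _ _ _
  -- disjointness of the whole configuration from S
  have hAS : Disjoint (({a₁, b₁, c₁, a₂, b₂, c₂, a₃} : Finset V) ∪ (T₁ ∪ (T₂ ∪ T₃))) S := by
    rw [Finset.disjoint_union_left, Finset.disjoint_union_left, Finset.disjoint_union_left]
    exact ⟨hvS, hT1S, hT2S, hT3S⟩
  -- cardinality
  have hcardA : (({a₁, b₁, c₁, a₂, b₂, c₂, a₃} : Finset V) ∪ (T₁ ∪ (T₂ ∪ T₃))).card = 34 := by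
    have hDA1 : Disjoint ({a₁, b₁, c₁, a₂, b₂, c₂, a₃} : Finset V) (T₁ ∪ (T₂ ∪ T₃)) := by
      rw [Finset.disjoint_union_right, Finset.disjoint_union_right]
      exact ⟨hT1W.symm, hT2W.symm, hT3W.symm⟩
    have hDA2 : Disjoint T₁ (T₂ ∪ T₃) := by
      rw [Finset.disjoint_union_right]
      exact ⟨hT21.symm, hT31.symm⟩
    have hDA3 : Disjoint T₂ T₃ := hT32.symm
    have hW7card : ({a₁, b₁, c₁, a₂, b₂, c₂, a₃} : Finset V).card = 7 := by
      have hEq : ({a₁, b₁, c₁, a₂, b₂, c₂, a₃} : Finset V) =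
          ([a₁, b₁, c₁, a₂, b₂, c₂, a₃] : List V).toFinset := by simp
      rw [hEq, List.toFinset_card_of_nodup hnd]
      rfl
    have h91 : T₁.card = 9 := hT1c
    have h92 : T₂.card = 9 := hT2c
    have h93 : T₃.card = 9 := hT3c
    rw [Finset.card_union_of_disjoint hDA1, Finset.card_union_of_disjoint hDA2,
      Finset.card_union_of_disjoint hDA3, hW7card, h91, h92, h93]
  refine ⟨hAS, hcardA, [P1, P2, P3, P4, P5, P6, ([a₁, b₁, c₂, a₃] : List V)], rfl, ?_, hfamPs⟩
  refine ⟨⟨?_, ?_⟩, by rw [hfamPs]; exact hAS,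
    [Q1, Q2, Q3, Q4, Q5, Q6, ([a₁, b₁, c₁, a₂, b₂, c₂, a₃] : List V)], ⟨?_, ?_⟩, ?_, ?_⟩
  · -- tightness of Ps members
    intro P hP
    simp only [List.mem_cons, List.not_mem_nil, or_false] at hP
    rcases hP with rfl | rfl | rfl | rfl | rfl | rfl | rfl
    exacts [htP1, htP2, htP3, htP4, htP5, htP6, htR]
  · -- pairwise disjointness of Ps
    refine List.Pairwise.cons ?_ (List.Pairwise.cons ?_ (List.Pairwise.cons ?_
      (List.Pairwise.cons ?_ (List.Pairwise.cons ?_ (List.Pairwise.cons ?_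
      (List.pairwise_singleton _ _))))))
    · intro L hL
      simp only [List.mem_cons, List.not_mem_nil, or_false] at hL
      rcases hL with rfl | rfl | rfl | rfl | rfl | rfl
      exacts [hdP12, dss hP1X hP3X hX12, dss hP1X hP4X hX12, dss hP1X hP5X hX13,
        dss hP1X hP6X hX13, dss hP1X hRX hX1R]
    · intro L hL
      simp only [List.mem_cons, List.not_mem_nil, or_false] at hL
      rcases hL with rfl | rfl | rfl | rfl | rfl
      exacts [dss hP2X hP3X hX12, dss hP2X hP4X hX12, dss hP2X hP5X hX13,
        dss hP2X hP6X hX13, dss hP2X hRX hX1R]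
    · intro L hL
      simp only [List.mem_cons, List.not_mem_nil, or_false] at hL
      rcases hL with rfl | rfl | rfl | rfl
      exacts [hdP34, dss hP3X hP5X hX23, dss hP3X hP6X hX23, dss hP3X hRX hX2R]
    · intro L hL
      simp only [List.mem_cons, List.not_mem_nil, or_false] at hL
      rcases hL with rfl | rfl | rfl
      exacts [dss hP4X hP5X hX23, dss hP4X hP6X hX23, dss hP4X hRX hX2R]
    · intro L hL
      simp only [List.mem_cons, List.not_mem_nil, or_false] at hL
      rcases hL with rfl | rfl
      exacts [hdP56, dss hP5X hRX hX3R]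
    · intro L hL
      simp only [List.mem_cons, List.not_mem_nil, or_false] at hL
      rcases hL with rfl
      exact dss hP6X hRX hX3R
  · -- tightness of Qs members
    intro Q hQ
    simp only [List.mem_cons, List.not_mem_nil, or_false] at hQ
    rcases hQ with rfl | rfl | rfl | rfl | rfl | rfl | rfl
    exacts [htQ1, htQ2, htQ3, htQ4, htQ5, htQ6, htR']
  · -- pairwise disjointness of Qs
    refine List.Pairwise.cons ?_ (List.Pairwise.cons ?_ (List.Pairwise.cons ?_
      (List.Pairwise.cons ?_ (List.Pairwise.cons ?_ (List.Pairwise.cons ?_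
      (List.pairwise_singleton _ _))))))
    · intro L hL
      simp only [List.mem_cons, List.not_mem_nil, or_false] at hL
      rcases hL with rfl | rfl | rfl | rfl | rfl | rfl
      exacts [hdQ12, dss hQ1X hQ3X hY12, dss hQ1X hQ4X hY12, dss hQ1X hQ5X hY13,
        dss hQ1X hQ6X hY13, dss hQ1X hR'X hY1R]
    · intro L hL
      simp only [List.mem_cons, List.not_mem_nil, or_false] at hL
      rcases hL with rfl | rfl | rfl | rfl | rfl
      exacts [dss hQ2X hQ3X hY12, dss hQ2X hQ4X hY12, dss hQ2X hQ5X hY13,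
        dss hQ2X hQ6X hY13, dss hQ2X hR'X hY1R]
    · intro L hL
      simp only [List.mem_cons, List.not_mem_nil, or_false] at hL
      rcases hL with rfl | rfl | rfl | rfl
      exacts [hdQ34, dss hQ3X hQ5X hY23, dss hQ3X hQ6X hY23, dss hQ3X hR'X hY2R]
    · intro L hL
      simp only [List.mem_cons, List.not_mem_nil, or_false] at hL
      rcases hL with rfl | rfl | rfl
      exacts [dss hQ4X hQ5X hY23, dss hQ4X hQ6X hY23, dss hQ4X hR'X hY2R]
    · intro L hL
      simp only [List.mem_cons, List.not_mem_nil, or_false] at hL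
      rcases hL with rfl | rfl
      exacts [hdQ56, dss hQ5X hR'X hY3R]
    · intro L hL
      simp only [List.mem_cons, List.not_mem_nil, or_false] at hL
      rcases hL with rfl
      exact dss hQ6X hR'X hY3R
  · -- famVerts of Qs
    rw [hfamQs, hfamPs]
  · -- same ends
    refine ⟨rfl, ?_⟩
    intro j hj
    simp only [List.length_cons, List.length_nil] at hj
    interval_cases j
    · simpa using hend1
    · simpa using hend2
    · simpa using hend3
    · simpa using hend4
    · simpa using hend5
    · simpa using hend6
    · exact ⟨rfl, rfl⟩

end BuildAbsorber


theorem statement3 :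
    ∀ α : ℝ, 0 < α → ∃ β₀ : ℝ, 0 < β₀ ∧ ∀ β : ℝ, 0 < β → β ≤ β₀ →
    ∃ n₀ : ℕ, ∀ n : ℕ, n₀ ≤ n →
    ∀ H : Finset (Finset (Fin n)), (∀ e ∈ H, e.card = 3) →
    ∀ (ℓ : ℕ) (Vs : Fin ℓ → Finset (Fin n)),
      (∀ i j : Fin ℓ, i ≠ j → Disjoint (Vs i) (Vs j)) →
      Finset.univ.biUnion Vs = (Finset.univ : Finset (Fin n)) →
      (∀ i : Fin ℓ, IsClosedSet H β 2 (Vs i)) →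
    ∀ S : Finset (Fin n), S.card = 3 →
      α * (n : ℝ) ^ 3 ≤
        ((H.filter fun e => ∀ j : Fin ℓ, (e ∩ Vs j).card = (S ∩ Vs j).card).card : ℝ) →
      β ^ 4 * (n : ℝ) ^ 34 / 2 ≤
        (({A : Finset (Fin n) | Disjoint A S ∧ A.card = 34 ∧
            ∃ Ps : List (List (Fin n)), Ps.length = 7 ∧ IsAbsorber H S Ps ∧ famVerts Ps = A} :
            Set (Finset (Fin n))).ncard : ℝ) := by
  intro α hα
  refine ⟨(α / 2) ^ 12 / (8 * (34 ^ 7 * 2 ^ 34 * 2 ^ 34 * 2 ^ 34)), by positivity, ?_⟩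
  intro β hβ hββ
  refine ⟨⌈(6 / α : ℝ)⌉₊ + ⌈(10 * (2 / α) ^ 12 : ℝ)⌉₊ + ⌈(56 / β : ℝ)⌉₊ + 1, ?_⟩
  intro n hn H hH3 ℓ Vs hVdisj hVcover hVclosed S hS3 hEdges
  classical
  -- numeric preliminaries
  have hn1 : 1 ≤ n := by omega
  have hnR : (1 : ℝ) ≤ (n : ℝ) := by exact_mod_cast hn1
  have hnpos : (0 : ℝ) < (n : ℝ) := by linarith
  have hc1 : (6 / α : ℝ) ≤ (n : ℝ) := by
    have h1 : ⌈(6 / α : ℝ)⌉₊ ≤ n := by omega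
    exact le_trans (Nat.le_ceil _) (by exact_mod_cast h1)
  have hc2 : (10 * (2 / α) ^ 12 : ℝ) ≤ (n : ℝ) := by
    have h1 : ⌈(10 * (2 / α) ^ 12 : ℝ)⌉₊ ≤ n := by omega
    exact le_trans (Nat.le_ceil _) (by exact_mod_cast h1)
  have hc3 : (56 / β : ℝ) ≤ (n : ℝ) := by
    have h1 : ⌈(56 / β : ℝ)⌉₊ ≤ n := by omega
    exact le_trans (Nat.le_ceil _) (by exact_mod_cast h1)
  haveI : Nonempty (Fin n) := ⟨⟨0, by omega⟩⟩
  have hcardV : Fintype.card (Fin n) = n := Fintype.card_fin n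
  -- the index-matching, S-avoiding edges
  set E2 : Finset (Finset (Fin n)) :=
    (H.filter fun e => ∀ j : Fin ℓ, (e ∩ Vs j).card = (S ∩ Vs j).card).filter
      (fun e => Disjoint e S) with hE2def
  have hE2H : ∀ e ∈ E2, e ∈ H := fun e he =>
    Finset.mem_filter.1 (Finset.mem_filter.1 he).1 |>.1
  have hE23 : ∀ e ∈ E2, e.card = 3 := fun e he => hH3 e (hE2H e he)
  have hE2S : ∀ e ∈ E2, Disjoint e S := fun e he => (Finset.mem_filter.1 he).2
  have hE2idx : ∀ e ∈ E2, ∀ j : Fin ℓ, (e ∩ Vs j).card = (S ∩ Vs j).card :=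
    fun e he => (Finset.mem_filter.1 (Finset.mem_filter.1 he).1).2
  -- claim 1 : E2 is still dense
  have claim1 : (α / 2) * (n : ℝ) ^ 3 ≤ (E2.card : ℝ) := by
    have hsplit := Finset.card_filter_add_card_filter_not
      (s := H.filter fun e => ∀ j : Fin ℓ, (e ∩ Vs j).card = (S ∩ Vs j).card)
      (p := fun e => Disjoint e S)
    have hbad : (((H.filter fun e => ∀ j : Fin ℓ, (e ∩ Vs j).card = (S ∩ Vs j).card).filter
        (fun e => ¬ Disjoint e S)).card) ≤ 3 * n ^ 2 := by
      have hb := card_filter_not_disjoint_le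
        (H.filter fun e => ∀ j : Fin ℓ, (e ∩ Vs j).card = (S ∩ Vs j).card) 2
        (fun e he => hH3 e (Finset.mem_filter.1 he).1) S
      rw [hcardV, hS3] at hb
      exact hb
    have hsplit' : (E2.card : ℝ) +
        (((H.filter fun e => ∀ j : Fin ℓ, (e ∩ Vs j).card = (S ∩ Vs j).card).filter
          (fun e => ¬ Disjoint e S)).card : ℝ) =
        (((H.filter fun e => ∀ j : Fin ℓ, (e ∩ Vs j).card = (S ∩ Vs j).card)).card : ℝ) := by
      rw [hE2def]
      exact_mod_cast hsplit
    have hbad' : (((H.filter fun e => ∀ j : Fin ℓ, (e ∩ Vs j).card = (S ∩ Vs j).card).filter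
        (fun e => ¬ Disjoint e S)).card : ℝ) ≤ 3 * (n : ℝ) ^ 2 := by
      exact_mod_cast hbad
    have h6 : (6 : ℝ) ≤ α * n := by
      rw [div_le_iff₀ hα] at hc1
      linarith
    have h3n : (3 : ℝ) * (n : ℝ) ^ 2 ≤ α / 2 * (n : ℝ) ^ 3 := by
      have hmul := mul_le_mul_of_nonneg_right h6 (sq_nonneg (n : ℝ))
      have heq : α * (n : ℝ) * (n : ℝ) ^ 2 = α * (n : ℝ) ^ 3 := by ring
      rw [heq] at hmul
      linarith
    linarith
  -- the injective theta tuples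
  set Θ : Finset (Fin n × Fin n × Fin n × Fin n × Fin n × Fin n × Fin n) :=
    Finset.univ.filter fun t : Fin n × Fin n × Fin n × Fin n × Fin n × Fin n × Fin n =>
      W12 E2 t.1 t.2.1 t.2.2.1 t.2.2.2.1 t.2.2.2.2.1 t.2.2.2.2.2.1 t.2.2.2.2.2.2 ∧
      Dist5 t.1 t.2.1 t.2.2.1 t.2.2.2.1 t.2.2.2.2.1 t.2.2.2.2.2.1 t.2.2.2.2.2.2 with hΘdef
  -- claim 2 : many theta tuples
  have claim2 : (α / 2) ^ 12 / 2 * (n : ℝ) ^ 7 ≤ (Θ.card : ℝ) := by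
    have htc := theta_count E2 hE23
    have hcc := clean_count E2
    rw [hcardV] at htc hcc
    have h1 : ((α / 2) * (n : ℝ) ^ 3) ^ 12 ≤ ((E2.card : ℝ)) ^ 12 :=
      pow_le_pow_left₀ (by positivity) claim1 12
    have h2 : (α / 2) ^ 12 * (n : ℝ) ^ 36 ≤ (n : ℝ) ^ 29 *
        ((Finset.univ.filter fun t : Fin n × Fin n × Fin n × Fin n × Fin n × Fin n × Fin n =>
          W12 E2 t.1 t.2.1 t.2.2.1 t.2.2.2.1 t.2.2.2.2.1 t.2.2.2.2.2.1 t.2.2.2.2.2.2).card : ℝ) := by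
      calc (α / 2) ^ 12 * (n : ℝ) ^ 36 = ((α / 2) * (n : ℝ) ^ 3) ^ 12 := by ring
        _ ≤ ((E2.card : ℝ)) ^ 12 := h1
        _ ≤ _ := htc
    have h3 : ((Finset.univ.filter fun t : Fin n × Fin n × Fin n × Fin n × Fin n × Fin n × Fin n =>
        W12 E2 t.1 t.2.1 t.2.2.1 t.2.2.2.1 t.2.2.2.2.1 t.2.2.2.2.2.1 t.2.2.2.2.2.2).card : ℝ) ≤
        (Θ.card : ℝ) + 5 * (n : ℝ) ^ 6 := by
      rw [hΘdef]
      exact_mod_cast hcc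
    have h29 : (0 : ℝ) < (n : ℝ) ^ 29 := by positivity
    have h4 : (α / 2) ^ 12 * (n : ℝ) ^ 7 ≤ (Θ.card : ℝ) + 5 * (n : ℝ) ^ 6 := by
      have hmul : (n : ℝ) ^ 29 *
          ((Finset.univ.filter fun t : Fin n × Fin n × Fin n × Fin n × Fin n × Fin n × Fin n =>
            W12 E2 t.1 t.2.1 t.2.2.1 t.2.2.2.1 t.2.2.2.2.1 t.2.2.2.2.2.1 t.2.2.2.2.2.2).card : ℝ)
          ≤ (n : ℝ) ^ 29 * ((Θ.card : ℝ) + 5 * (n : ℝ) ^ 6) :=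
        mul_le_mul_of_nonneg_left h3 (by positivity)
      have hstep : (n : ℝ) ^ 29 * ((α / 2) ^ 12 * (n : ℝ) ^ 7) ≤
          (n : ℝ) ^ 29 * ((Θ.card : ℝ) + 5 * (n : ℝ) ^ 6) := by
        calc (n : ℝ) ^ 29 * ((α / 2) ^ 12 * (n : ℝ) ^ 7)
            = (α / 2) ^ 12 * (n : ℝ) ^ 36 := by ring
          _ ≤ _ := le_trans h2 hmul
      exact (mul_le_mul_iff_right₀ h29).1 hstep
    have hA : (0 : ℝ) < (α / 2) ^ 12 := by positivity
    have h10 : (10 : ℝ) ≤ (α / 2) ^ 12 * (n : ℝ) := by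
      have hinv : ((2 / α) ^ 12 : ℝ) = ((α / 2) ^ 12)⁻¹ := by
        rw [← inv_div α 2, inv_pow]
      rw [hinv] at hc2
      have hmul := mul_le_mul_of_nonneg_left hc2 (le_of_lt hA)
      have heq : (α / 2) ^ 12 * (10 * ((α / 2) ^ 12)⁻¹) = 10 := by
        field_simp
      rw [heq] at hmul
      linarith
    have h5 : 5 * (n : ℝ) ^ 6 ≤ (α / 2) ^ 12 / 2 * (n : ℝ) ^ 7 := by
      have hmul := mul_le_mul_of_nonneg_right h10 (pow_nonneg hnpos.le 6)
      have heq : (α / 2) ^ 12 * (n : ℝ) * (n : ℝ) ^ 6 = (α / 2) ^ 12 * (n : ℝ) ^ 7 := by ring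
      rw [heq] at hmul
      linarith
    linarith
  -- part-compatible labelings of S
  have hmatch : ∀ t : Fin n × Fin n × Fin n × Fin n × Fin n × Fin n × Fin n,
      ∃ s₁ s₂ s₃ : Fin n, t ∈ Θ →
        (S = {s₁, s₂, s₃} ∧ s₁ ≠ s₂ ∧ s₁ ≠ s₃ ∧ s₂ ≠ s₃ ∧
          Reachable H β 2 t.2.2.1 s₁ ∧ Reachable H β 2 t.2.2.2.2.2.1 s₂ ∧
          Reachable H β 2 t.2.1 s₃) := by
    intro t
    by_cases ht : t ∈ Θ
    · have ht' := ht
      rw [hΘdef, Finset.mem_filter] at ht'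
      obtain ⟨-, hW, hD⟩ := ht'
      unfold W12 at hW
      obtain ⟨⟨w1, w2, w3, w4⟩, ⟨w5, w6, w7, w8⟩, ⟨w9, w10, w11, w12⟩⟩ := hW
      have hXeq : ({t.2.2.1, t.2.2.2.2.2.1, t.2.1} : Finset (Fin n)) =
          {t.2.2.2.2.2.1, t.2.1, t.2.2.1} := by
        ext a; simp; tauto
      have heE2 : ({t.2.2.2.2.2.1, t.2.1, t.2.2.1} : Finset (Fin n)) ∈ E2 := w6
      have hXcard : ({t.2.2.1, t.2.2.2.2.2.1, t.2.1} : Finset (Fin n)).card = 3 := by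
        rw [hXeq]; exact hE23 _ heE2
      have hXidx : ∀ j : Fin ℓ,
          (({t.2.2.1, t.2.2.2.2.2.1, t.2.1} : Finset (Fin n)) ∩ Vs j).card
          = (S ∩ Vs j).card := by
        intro j; rw [hXeq]; exact hE2idx _ heE2 j
      obtain ⟨g, hginj, hgim, hgpart⟩ :=
        exists_part_matching Vs hVdisj hVcover 3 _ S hXcard hXidx
      obtain ⟨hx1, hx2, hx3⟩ := triple_distinct hXcard
      have hm1 : t.2.2.1 ∈ ({t.2.2.1, t.2.2.2.2.2.1, t.2.1} : Finset (Fin n)) := by simp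
      have hm2 : t.2.2.2.2.2.1 ∈ ({t.2.2.1, t.2.2.2.2.2.1, t.2.1} : Finset (Fin n)) := by simp
      have hm3 : t.2.1 ∈ ({t.2.2.1, t.2.2.2.2.2.1, t.2.1} : Finset (Fin n)) := by simp
      have hc1S : t.2.2.1 ∉ S := fun hc =>
        (Finset.disjoint_left.1 (hE2S _ heE2)) (by simp) hc
      have ha2S : t.2.2.2.2.2.1 ∉ S := fun hc =>
        (Finset.disjoint_left.1 (hE2S _ heE2)) (by simp) hc
      have hb2S : t.2.1 ∉ S := fun hc =>
        (Finset.disjoint_left.1 (hE2S _ heE2)) (by simp) hc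
      have hgSmem : ∀ x ∈ ({t.2.2.1, t.2.2.2.2.2.1, t.2.1} : Finset (Fin n)), g x ∈ S := by
        intro x hx
        rw [← hgim]
        exact Finset.mem_image_of_mem g hx
      refine ⟨g t.2.2.1, g t.2.2.2.2.2.1, g t.2.1, fun _ => ?_⟩
      refine ⟨?_, ?_, ?_, ?_, ?_, ?_, ?_⟩
      · rw [← hgim]
        simp [Finset.image_insert]
      · exact fun h => hx1 (hginj (Finset.mem_coe.2 hm1) (Finset.mem_coe.2 hm2) h)
      · exact fun h => hx2 (hginj (Finset.mem_coe.2 hm1) (Finset.mem_coe.2 hm3) h)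
      · exact fun h => hx3 (hginj (Finset.mem_coe.2 hm2) (Finset.mem_coe.2 hm3) h)
      · obtain ⟨j, hj1, hj2⟩ := hgpart _ hm1
        refine hVclosed j _ hj1 _ hj2 ?_
        intro heqc
        exact hc1S (heqc ▸ hgSmem _ hm1)
      · obtain ⟨j, hj1, hj2⟩ := hgpart _ hm2
        refine hVclosed j _ hj1 _ hj2 ?_
        intro heqc
        exact ha2S (heqc ▸ hgSmem _ hm2)
      · obtain ⟨j, hj1, hj2⟩ := hgpart _ hm3
        refine hVclosed j _ hj1 _ hj2 ?_
        intro heqc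
        exact hb2S (heqc ▸ hgSmem _ hm3)
    · exact ⟨⟨0, by omega⟩, ⟨0, by omega⟩, ⟨0, by omega⟩, fun h => absurd h ht⟩
  choose s1 s2 s3 hsfun using hmatch
  -- the three families of witness sets
  set Wv : (Fin n × Fin n × Fin n × Fin n × Fin n × Fin n × Fin n) → Finset (Fin n) :=
    fun t => ({t.2.2.2.2.1, t.1, t.2.2.1, t.2.2.2.2.2.1, t.2.1, t.2.2.2.1,
      t.2.2.2.2.2.2} : Finset (Fin n)) with hWvdef
  set Tf1 : (Fin n × Fin n × Fin n × Fin n × Fin n × Fin n × Fin n) →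
      Finset (Finset (Fin n)) :=
    fun t => (RWfin H t.2.2.1 (s1 t)).filter (fun T => Disjoint T (Wv t ∪ S)) with hTf1def
  set Tf2 : (Fin n × Fin n × Fin n × Fin n × Fin n × Fin n × Fin n) → Finset (Fin n) →
      Finset (Finset (Fin n)) :=
    fun t T₁ => (RWfin H t.2.2.2.2.2.1 (s2 t)).filter
      (fun T => Disjoint T (Wv t ∪ S ∪ T₁)) with hTf2def
  set Tf3 : (Fin n × Fin n × Fin n × Fin n × Fin n × Fin n × Fin n) → Finset (Fin n) →
      Finset (Fin n) → Finset (Finset (Fin n)) :=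
    fun t T₁ T₂ => (RWfin H t.2.1 (s3 t)).filter
      (fun T => Disjoint T (Wv t ∪ S ∪ T₁ ∪ T₂)) with hTf3def
  -- the collection of configurations
  set BU : Finset ((Fin n × Fin n × Fin n × Fin n × Fin n × Fin n × Fin n) ×
      Finset (Fin n) × Finset (Fin n) × Finset (Fin n)) :=
    Θ.biUnion (fun t => (Tf1 t).biUnion (fun T₁ => (Tf2 t T₁).biUnion (fun T₂ =>
      (Tf3 t T₁ T₂).image (fun T₃ => (t, T₁, T₂, T₃))))) with hBUdef
  -- claim 3 : many configurations
  have claim3 : (Θ.card : ℝ) * (β / 2 * (n : ℝ) ^ 9) ^ 3 ≤ (BU.card : ℝ) := by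
    have hx0 : (0 : ℝ) ≤ β / 2 * (n : ℝ) ^ 9 := by positivity
    have h56 : (56 : ℝ) ≤ β * n := by
      rw [div_le_iff₀ hβ] at hc3
      linarith
    have h28 : (28 : ℝ) * (n : ℝ) ^ 8 ≤ β / 2 * (n : ℝ) ^ 9 := by
      have h8 : (0 : ℝ) ≤ (n : ℝ) ^ 8 := by positivity
      have hmul := mul_le_mul_of_nonneg_right h56 h8
      have heq : β * (n : ℝ) * (n : ℝ) ^ 8 = β * (n : ℝ) ^ 9 := by ring
      rw [heq] at hmul
      linarith
    have hWvcard : ∀ t : Fin n × Fin n × Fin n × Fin n × Fin n × Fin n × Fin n,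
        (Wv t).card ≤ 7 := by
      intro t
      simp only [hWvdef]
      exact card7_le _ _ _ _ _ _ _
    have hRW9 : ∀ (u v : Fin n), ∀ T ∈ RWfin H u v, T.card = 8 + 1 := by
      intro u v T hT
      exact RWset_card9 (RWfin_mem.1 hT)
    -- generic filter bound
    have hTgen : ∀ (u v : Fin n) (F : Finset (Fin n)), Reachable H β 2 u v → F.card ≤ 28 →
        β / 2 * (n : ℝ) ^ 9 ≤
          (((RWfin H u v).filter (fun T => Disjoint T F)).card : ℝ) := by
      intro u v F hr hF
      have hRWcard := RWfin_card H hr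
      rw [hcardV] at hRWcard
      have hbad := card_filter_not_disjoint_le (RWfin H u v) 8 (hRW9 u v) F
      rw [hcardV] at hbad
      have hbad28 : ((RWfin H u v).filter (fun T => ¬ Disjoint T F)).card ≤ 28 * n ^ 8 :=
        le_trans hbad (Nat.mul_le_mul_right _ hF)
      have hsplit := Finset.card_filter_add_card_filter_not
        (s := RWfin H u v) (p := fun T => Disjoint T F)
      have hsplit' : (((RWfin H u v).filter (fun T => Disjoint T F)).card : ℝ) +
          (((RWfin H u v).filter (fun T => ¬ Disjoint T F)).card : ℝ) =
          ((RWfin H u v).card : ℝ) := by exact_mod_cast hsplit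
      have hbad28' : (((RWfin H u v).filter (fun T => ¬ Disjoint T F)).card : ℝ) ≤
          28 * (n : ℝ) ^ 8 := by exact_mod_cast hbad28
      linarith
    -- cardinalities of the exclusion sets
    have hFcard1 : ∀ t, (Wv t ∪ S).card ≤ 28 := by
      intro t
      calc (Wv t ∪ S).card ≤ (Wv t).card + S.card := Finset.card_union_le _ _
        _ ≤ 7 + 3 := by
            have := hWvcard t
            omega
        _ ≤ 28 := by omega
    have hFcard2 : ∀ t T₁, T₁ ∈ Tf1 t → (Wv t ∪ S ∪ T₁).card ≤ 28 := by
      intro t T₁ hT₁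
      have h9 : T₁.card = 9 := by
        rw [hTf1def] at hT₁
        exact RWset_card9 (RWfin_mem.1 (Finset.mem_filter.1 hT₁).1)
      calc (Wv t ∪ S ∪ T₁).card ≤ (Wv t ∪ S).card + T₁.card := Finset.card_union_le _ _
        _ ≤ 28 := by
            have h1 := hFcard1 t
            have h2 : (Wv t ∪ S).card ≤ 10 := by
              calc (Wv t ∪ S).card ≤ (Wv t).card + S.card := Finset.card_union_le _ _
                _ ≤ 10 := by have := hWvcard t; omega
            omega
    have hFcard3 : ∀ t T₁ T₂, T₁ ∈ Tf1 t → T₂ ∈ Tf2 t T₁ →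
        (Wv t ∪ S ∪ T₁ ∪ T₂).card ≤ 28 := by
      intro t T₁ T₂ hT₁ hT₂
      have h91 : T₁.card = 9 := by
        rw [hTf1def] at hT₁
        exact RWset_card9 (RWfin_mem.1 (Finset.mem_filter.1 hT₁).1)
      have h92 : T₂.card = 9 := by
        rw [hTf2def] at hT₂
        exact RWset_card9 (RWfin_mem.1 (Finset.mem_filter.1 hT₂).1)
      have h2 : (Wv t ∪ S).card ≤ 10 := by
        calc (Wv t ∪ S).card ≤ (Wv t).card + S.card := Finset.card_union_le _ _
          _ ≤ 10 := by have := hWvcard t; omega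
      calc (Wv t ∪ S ∪ T₁ ∪ T₂).card ≤ (Wv t ∪ S ∪ T₁).card + T₂.card :=
          Finset.card_union_le _ _
        _ ≤ ((Wv t ∪ S).card + T₁.card) + T₂.card := by
            have := Finset.card_union_le (Wv t ∪ S) T₁
            omega
        _ ≤ 28 := by omega
    -- per-level bounds
    have hT1b : ∀ t ∈ Θ, β / 2 * (n : ℝ) ^ 9 ≤ ((Tf1 t).card : ℝ) := by
      intro t ht
      obtain ⟨-, -, -, -, hr1, -, -⟩ := hsfun t ht
      rw [hTf1def]
      exact hTgen _ _ _ hr1 (hFcard1 t)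
    have hT2b : ∀ t ∈ Θ, ∀ T₁ ∈ Tf1 t, β / 2 * (n : ℝ) ^ 9 ≤ ((Tf2 t T₁).card : ℝ) := by
      intro t ht T₁ hT₁
      obtain ⟨-, -, -, -, -, hr2, -⟩ := hsfun t ht
      rw [hTf2def]
      exact hTgen _ _ _ hr2 (hFcard2 t T₁ hT₁)
    have hT3b : ∀ t ∈ Θ, ∀ T₁ ∈ Tf1 t, ∀ T₂ ∈ Tf2 t T₁,
        β / 2 * (n : ℝ) ^ 9 ≤ ((Tf3 t T₁ T₂).card : ℝ) := by
      intro t ht T₁ hT₁ T₂ hT₂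
      obtain ⟨-, -, -, -, -, -, hr3⟩ := hsfun t ht
      rw [hTf3def]
      exact hTgen _ _ _ hr3 (hFcard3 t T₁ T₂ hT₁ hT₂)
    -- card identities for the nested biUnions
    have hc3card : ∀ t T₁ T₂, ((Tf3 t T₁ T₂).image
        (fun T₃ => ((t, T₁, T₂, T₃) : (Fin n × Fin n × Fin n × Fin n × Fin n × Fin n × Fin n) ×
          Finset (Fin n) × Finset (Fin n) × Finset (Fin n)))).card = (Tf3 t T₁ T₂).card := by
      intro t T₁ T₂
      apply Finset.card_image_of_injective
      intro a b hab
      simpa using congrArg (fun ω => ω.2.2.2) hab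
    have hc2card : ∀ t T₁, (((Tf2 t T₁).biUnion (fun T₂ => (Tf3 t T₁ T₂).image
        (fun T₃ => (t, T₁, T₂, T₃)))).card : ℝ) =
        ∑ T₂ ∈ Tf2 t T₁, ((Tf3 t T₁ T₂).card : ℝ) := by
      intro t T₁
      rw [Finset.card_biUnion]
      · push_cast
        refine Finset.sum_congr rfl fun T₂ _ => ?_
        exact_mod_cast hc3card t T₁ T₂
      · intro T₂ _ T₂' _ hne
        rw [Function.onFun, Finset.disjoint_left]
        intro ω hω hω'
        simp only [Finset.mem_image] at hω hω'
        obtain ⟨x, -, rfl⟩ := hω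
        obtain ⟨y, -, hxy⟩ := hω'
        exact hne (by simpa using congrArg (fun ω => ω.2.2.1) hxy.symm)
    have hF2b : ∀ t ∈ Θ, ∀ T₁ ∈ Tf1 t, (β / 2 * (n : ℝ) ^ 9) ^ 2 ≤
        (((Tf2 t T₁).biUnion (fun T₂ => (Tf3 t T₁ T₂).image
          (fun T₃ => (t, T₁, T₂, T₃)))).card : ℝ) := by
      intro t ht T₁ hT₁
      rw [hc2card]
      calc (β / 2 * (n : ℝ) ^ 9) ^ 2 = (β / 2 * (n : ℝ) ^ 9) * (β / 2 * (n : ℝ) ^ 9) := sq _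
        _ ≤ ((Tf2 t T₁).card : ℝ) * (β / 2 * (n : ℝ) ^ 9) :=
            mul_le_mul_of_nonneg_right (hT2b t ht T₁ hT₁) hx0
        _ = ∑ _T₂ ∈ Tf2 t T₁, (β / 2 * (n : ℝ) ^ 9) := by
            rw [Finset.sum_const, nsmul_eq_mul]
        _ ≤ ∑ T₂ ∈ Tf2 t T₁, ((Tf3 t T₁ T₂).card : ℝ) :=
            Finset.sum_le_sum fun T₂ hT₂ => hT3b t ht T₁ hT₁ T₂ hT₂
    have hc1card : ∀ t, (((Tf1 t).biUnion (fun T₁ => (Tf2 t T₁).biUnion (fun T₂ =>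
        (Tf3 t T₁ T₂).image (fun T₃ => (t, T₁, T₂, T₃))))).card : ℝ) =
        ∑ T₁ ∈ Tf1 t, (((Tf2 t T₁).biUnion (fun T₂ => (Tf3 t T₁ T₂).image
          (fun T₃ => (t, T₁, T₂, T₃)))).card : ℝ) := by
      intro t
      rw [Finset.card_biUnion]
      · push_cast
        rfl
      · intro T₁ _ T₁' _ hne
        rw [Function.onFun, Finset.disjoint_left]
        intro ω hω hω'
        simp only [Finset.mem_biUnion, Finset.mem_image] at hω hω'
        obtain ⟨T₂, -, x, -, rfl⟩ := hω
        obtain ⟨T₂', -, y, -, hxy⟩ := hω'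
        exact hne (by simpa using congrArg (fun ω => ω.2.1) hxy.symm)
    have hF1b : ∀ t ∈ Θ, (β / 2 * (n : ℝ) ^ 9) ^ 3 ≤
        (((Tf1 t).biUnion (fun T₁ => (Tf2 t T₁).biUnion (fun T₂ =>
          (Tf3 t T₁ T₂).image (fun T₃ => (t, T₁, T₂, T₃))))).card : ℝ) := by
      intro t ht
      rw [hc1card]
      calc (β / 2 * (n : ℝ) ^ 9) ^ 3
          = (β / 2 * (n : ℝ) ^ 9) * (β / 2 * (n : ℝ) ^ 9) ^ 2 := by ring
        _ ≤ ((Tf1 t).card : ℝ) * (β / 2 * (n : ℝ) ^ 9) ^ 2 :=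
            mul_le_mul_of_nonneg_right (hT1b t ht) (by positivity)
        _ = ∑ _T₁ ∈ Tf1 t, (β / 2 * (n : ℝ) ^ 9) ^ 2 := by
            rw [Finset.sum_const, nsmul_eq_mul]
        _ ≤ _ := Finset.sum_le_sum fun T₁ hT₁ => hF2b t ht T₁ hT₁
    have hBUeq : (BU.card : ℝ) = ∑ t ∈ Θ, (((Tf1 t).biUnion (fun T₁ =>
        (Tf2 t T₁).biUnion (fun T₂ => (Tf3 t T₁ T₂).image
          (fun T₃ => (t, T₁, T₂, T₃))))).card : ℝ) := by
      rw [hBUdef, Finset.card_biUnion]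
      · push_cast
        rfl
      · intro t _ t' _ hne
        rw [Function.onFun, Finset.disjoint_left]
        intro ω hω hω'
        simp only [Finset.mem_biUnion, Finset.mem_image] at hω hω'
        obtain ⟨T₁, -, T₂, -, x, -, rfl⟩ := hω
        obtain ⟨T₁', -, T₂', -, y, -, hxy⟩ := hω'
        exact hne (by simpa using congrArg (fun ω => ω.1) hxy.symm)
    rw [hBUeq]
    calc (Θ.card : ℝ) * (β / 2 * (n : ℝ) ^ 9) ^ 3
        = ∑ _t ∈ Θ, (β / 2 * (n : ℝ) ^ 9) ^ 3 := by
          rw [Finset.sum_const, nsmul_eq_mul]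
      _ ≤ _ := Finset.sum_le_sum fun t ht => hF1b t ht
  -- the vertex-set map
  set Φ : ((Fin n × Fin n × Fin n × Fin n × Fin n × Fin n × Fin n) ×
      Finset (Fin n) × Finset (Fin n) × Finset (Fin n)) → Finset (Fin n) :=
    fun ω => Wv ω.1 ∪ (ω.2.1 ∪ (ω.2.2.1 ∪ ω.2.2.2)) with hΦdef
  --每 configuration gives an absorber
  have habs : ∀ ω ∈ BU, Disjoint (Φ ω) S ∧ (Φ ω).card = 34 ∧
      ∃ Ps : List (List (Fin n)), Ps.length = 7 ∧ IsAbsorber H S Ps ∧ famVerts Ps = Φ ω := by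
    intro ω hω
    rw [hBUdef] at hω
    simp only [Finset.mem_biUnion, Finset.mem_image] at hω
    obtain ⟨t, ht, T₁, hT₁, T₂, hT₂, T₃, hT₃, rfl⟩ := hω
    obtain ⟨hSeq, hs12, hs13, hs23, hr1, hr2, hr3⟩ := hsfun t ht
    obtain ⟨b₁, b₂, c₁, c₂, a₁, a₂, a₃⟩ := t
    have ht' := ht
    rw [hΘdef, Finset.mem_filter] at ht'
    obtain ⟨-, hW, hD⟩ := ht'
    unfold W12 at hW
    unfold Dist5 at hD
    obtain ⟨⟨w1, w2, w3, w4⟩, ⟨w5, w6, w7, w8⟩, ⟨w9, w10, w11, w12⟩⟩ := hW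
    obtain ⟨db, dc, da12, da13, da23⟩ := hD
    -- windows reorderings
    have hw1 : ({a₁, b₁, c₁} : Finset (Fin n)) ∈ H := hE2H _ w1
    have hw2 : ({b₁, c₁, a₂} : Finset (Fin n)) ∈ H := by
      have hset : ({b₁, c₁, a₂} : Finset (Fin n)) = {a₂, b₁, c₁} := by
        ext x; simp; tauto
      rw [hset]; exact hE2H _ w5
    have hw3 : ({c₁, a₂, b₂} : Finset (Fin n)) ∈ H := by
      have hset : ({c₁, a₂, b₂} : Finset (Fin n)) = {a₂, b₂, c₁} := by
        ext x; simp; tauto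
      rw [hset]; exact hE2H _ w6
    have hw4 : ({a₂, b₂, c₂} : Finset (Fin n)) ∈ H := hE2H _ w8
    have hw5 : ({b₂, c₂, a₃} : Finset (Fin n)) ∈ H := by
      have hset : ({b₂, c₂, a₃} : Finset (Fin n)) = {a₃, b₂, c₂} := by
        ext x; simp; tauto
      rw [hset]; exact hE2H _ w12
    have hw6 : ({a₁, b₁, c₂} : Finset (Fin n)) ∈ H := hE2H _ w3
    have hw7 : ({b₁, c₂, a₃} : Finset (Fin n)) ∈ H := by
      have hset : ({b₁, c₂, a₃} : Finset (Fin n)) = {a₃, b₁, c₂} := by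
        ext x; simp; tauto
      rw [hset]; exact hE2H _ w11
    -- distinctness
    have t1 := triple_distinct (hE23 _ w1)
    have t2 := triple_distinct (hE23 _ w2)
    have t3 := triple_distinct (hE23 _ w3)
    have t5 := triple_distinct (hE23 _ w5)
    have t6 := triple_distinct (hE23 _ w6)
    have t8 := triple_distinct (hE23 _ w8)
    have t9 := triple_distinct (hE23 _ w9)
    have t10 := triple_distinct (hE23 _ w10)
    have t11 := triple_distinct (hE23 _ w11)
    have hnd : ([a₁, b₁, c₁, a₂, b₂, c₂, a₃] : List (Fin n)).Nodup := by
      simp only [List.nodup_cons, List.mem_cons, List.not_mem_nil, or_false, not_or,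
        List.nodup_nil, and_true]
      exact ⟨⟨t1.1, t1.2.1, da12, t2.1, t3.2.1, da13⟩,
        ⟨t1.2.2, Ne.symm t5.1, db, t3.2.2, Ne.symm t9.1⟩,
        ⟨Ne.symm t5.2.1, Ne.symm t2.2.2, dc, Ne.symm t9.2.1⟩,
        ⟨t6.1, t8.2.1, da23⟩, ⟨t8.2.2, Ne.symm t10.1⟩, Ne.symm t11.2.1, not_false⟩
    -- the witness sets
    rw [hTf1def] at hT₁
    rw [hTf2def] at hT₂
    rw [hTf3def] at hT₃
    dsimp only at hT₁ hT₂ hT₃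
    rw [Finset.mem_filter] at hT₁ hT₂ hT₃
    obtain ⟨hT₁m, hT₁d⟩ := hT₁
    obtain ⟨hT₂m, hT₂d⟩ := hT₂
    obtain ⟨hT₃m, hT₃d⟩ := hT₃
    simp only [hWvdef] at hT₁d hT₂d hT₃d
    -- S avoidance for the 7 vertices
    have hvS : Disjoint ({a₁, b₁, c₁, a₂, b₂, c₂, a₃} : Finset (Fin n)) S := by
      rw [Finset.disjoint_left]
      intro x hx hxS
      simp only [Finset.mem_insert, Finset.mem_singleton] at hx
      rcases hx with rfl | rfl | rfl | rfl | rfl | rfl | rfl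
      · exact (Finset.disjoint_left.1 (hE2S _ w1)) (by simp) hxS
      · exact (Finset.disjoint_left.1 (hE2S _ w1)) (by simp) hxS
      · exact (Finset.disjoint_left.1 (hE2S _ w1)) (by simp) hxS
      · exact (Finset.disjoint_left.1 (hE2S _ w8)) (by simp) hxS
      · exact (Finset.disjoint_left.1 (hE2S _ w8)) (by simp) hxS
      · exact (Finset.disjoint_left.1 (hE2S _ w8)) (by simp) hxS
      · exact (Finset.disjoint_left.1 (hE2S _ w11)) (by simp) hxS
    have hres := build_absorber H S a₁ b₁ c₁ a₂ b₂ c₂ a₃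
      (s1 (b₁, b₂, c₁, c₂, a₁, a₂, a₃)) (s2 (b₁, b₂, c₁, c₂, a₁, a₂, a₃))
      (s3 (b₁, b₂, c₁, c₂, a₁, a₂, a₃)) T₁ T₂ T₃
      hw1 hw2 hw3 hw4 hw5 hw6 hw7 hnd hSeq hs12 hs13 hs23
      (RWfin_mem.1 hT₁m) (RWfin_mem.1 hT₂m) (RWfin_mem.1 hT₃m)
      hT₁d hT₂d hT₃d hvS
    simp only [hΦdef, hWvdef]
    exact hres
  -- fiber bound
  have claim5 : BU.card ≤ (34 ^ 7 * 2 ^ 34 * 2 ^ 34 * 2 ^ 34) * (BU.image Φ).card := by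
    apply Finset.card_le_mul_card_image
    intro A hA
    obtain ⟨ω₀, hω₀, rfl⟩ := Finset.mem_image.1 hA
    have hA34 : (Φ ω₀).card = 34 := (habs ω₀ hω₀).2.1
    have hsub : (BU.filter fun ω => Φ ω = Φ ω₀) ⊆
        (Φ ω₀ ×ˢ Φ ω₀ ×ˢ Φ ω₀ ×ˢ Φ ω₀ ×ˢ Φ ω₀ ×ˢ Φ ω₀ ×ˢ Φ ω₀) ×ˢ
          ((Φ ω₀).powerset ×ˢ (Φ ω₀).powerset ×ˢ (Φ ω₀).powerset) := by
      intro ω hω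
      rw [Finset.mem_filter] at hω
      obtain ⟨hωBU, hΦeq⟩ := hω
      have hmem7 : ∀ x, x ∈ Wv ω.1 → x ∈ Φ ω₀ := by
        intro x hx
        rw [← hΦeq]
        simp only [hΦdef]
        exact Finset.mem_union_left _ hx
      have hTsub : ∀ x, (x ∈ ω.2.1 ∨ x ∈ ω.2.2.1 ∨ x ∈ ω.2.2.2) → x ∈ Φ ω₀ := by
        intro x hx
        rw [← hΦeq]
        simp only [hΦdef]
        apply Finset.mem_union_right
        simp only [Finset.mem_union]
        tauto
      simp only [Finset.mem_product, Finset.mem_powerset]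
      refine ⟨⟨?_, ?_, ?_, ?_, ?_, ?_, ?_⟩, ?_, ?_, ?_⟩
      · exact hmem7 _ (by simp [hWvdef])
      · exact hmem7 _ (by simp [hWvdef])
      · exact hmem7 _ (by simp [hWvdef])
      · exact hmem7 _ (by simp [hWvdef])
      · exact hmem7 _ (by simp [hWvdef])
      · exact hmem7 _ (by simp [hWvdef])
      · exact hmem7 _ (by simp [hWvdef])
      · exact fun x hx => hTsub x (Or.inl hx)
      · exact fun x hx => hTsub x (Or.inr (Or.inl hx))
      · exact fun x hx => hTsub x (Or.inr (Or.inr hx))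
    calc (BU.filter fun ω => Φ ω = Φ ω₀).card ≤ _ := Finset.card_le_card hsub
      _ = 34 ^ 7 * 2 ^ 34 * 2 ^ 34 * 2 ^ 34 := by
          simp only [Finset.card_product, Finset.card_powerset, hA34]
          norm_num
  -- the image consists of absorber vertex sets
  have claim6 : ((BU.image Φ).card : ℝ) ≤
      (({A : Finset (Fin n) | Disjoint A S ∧ A.card = 34 ∧
          ∃ Ps : List (List (Fin n)), Ps.length = 7 ∧ IsAbsorber H S Ps ∧ famVerts Ps = A} :
          Set (Finset (Fin n))).ncard : ℝ) := by
    have hsub : (↑(BU.image Φ) : Set (Finset (Fin n))) ⊆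
        {A : Finset (Fin n) | Disjoint A S ∧ A.card = 34 ∧
          ∃ Ps : List (List (Fin n)), Ps.length = 7 ∧ IsAbsorber H S Ps ∧ famVerts Ps = A} := by
      intro A hA
      rw [Finset.mem_coe, Finset.mem_image] at hA
      obtain ⟨ω, hω, rfl⟩ := hA
      exact habs ω hω
    have := Set.ncard_le_ncard hsub (Set.toFinite _)
    rw [Set.ncard_coe_finset] at this
    exact_mod_cast this
  -- final arithmetic
  have hMpos : (0 : ℝ) < (34 ^ 7 * 2 ^ 34 * 2 ^ 34 * 2 ^ 34 : ℝ) := by positivity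
  have h5' : (BU.card : ℝ) ≤ (34 ^ 7 * 2 ^ 34 * 2 ^ 34 * 2 ^ 34 : ℝ) *
      ((BU.image Φ).card : ℝ) := by exact_mod_cast claim5
  have hβM : β * (34 ^ 7 * 2 ^ 34 * 2 ^ 34 * 2 ^ 34 : ℝ) ≤ (α / 2) ^ 12 / 8 := by
    rw [le_div_iff₀ (by positivity : (0:ℝ) < 8 * (34 ^ 7 * 2 ^ 34 * 2 ^ 34 * 2 ^ 34))] at hββ
    linarith
  have hkey : (34 ^ 7 * 2 ^ 34 * 2 ^ 34 * 2 ^ 34 : ℝ) * (β ^ 4 * (n : ℝ) ^ 34 / 2) ≤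
      (α / 2) ^ 12 / 2 * (n : ℝ) ^ 7 * (β / 2 * (n : ℝ) ^ 9) ^ 3 := by
    calc (34 ^ 7 * 2 ^ 34 * 2 ^ 34 * 2 ^ 34 : ℝ) * (β ^ 4 * (n : ℝ) ^ 34 / 2)
        = (β * (34 ^ 7 * 2 ^ 34 * 2 ^ 34 * 2 ^ 34 : ℝ)) * (β ^ 3 * (n : ℝ) ^ 34 / 2) := by
          ring
      _ ≤ ((α / 2) ^ 12 / 8) * (β ^ 3 * (n : ℝ) ^ 34 / 2) := by
          apply mul_le_mul_of_nonneg_right hβM (by positivity)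
      _ = (α / 2) ^ 12 / 2 * (n : ℝ) ^ 7 * (β / 2 * (n : ℝ) ^ 9) ^ 3 := by ring
  have hΘx : (α / 2) ^ 12 / 2 * (n : ℝ) ^ 7 * (β / 2 * (n : ℝ) ^ 9) ^ 3 ≤
      (Θ.card : ℝ) * (β / 2 * (n : ℝ) ^ 9) ^ 3 := by
    apply mul_le_mul_of_nonneg_right claim2 (by positivity)
  have hchain : (34 ^ 7 * 2 ^ 34 * 2 ^ 34 * 2 ^ 34 : ℝ) * (β ^ 4 * (n : ℝ) ^ 34 / 2) ≤
      (34 ^ 7 * 2 ^ 34 * 2 ^ 34 * 2 ^ 34 : ℝ) *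
        (({A : Finset (Fin n) | Disjoint A S ∧ A.card = 34 ∧
            ∃ Ps : List (List (Fin n)), Ps.length = 7 ∧ IsAbsorber H S Ps ∧ famVerts Ps = A} :
            Set (Finset (Fin n))).ncard : ℝ) := by
    calc (34 ^ 7 * 2 ^ 34 * 2 ^ 34 * 2 ^ 34 : ℝ) * (β ^ 4 * (n : ℝ) ^ 34 / 2)
        ≤ (α / 2) ^ 12 / 2 * (n : ℝ) ^ 7 * (β / 2 * (n : ℝ) ^ 9) ^ 3 := hkey
      _ ≤ (Θ.card : ℝ) * (β / 2 * (n : ℝ) ^ 9) ^ 3 := hΘx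
      _ ≤ (BU.card : ℝ) := claim3
      _ ≤ (34 ^ 7 * 2 ^ 34 * 2 ^ 34 * 2 ^ 34 : ℝ) * ((BU.image Φ).card : ℝ) := h5'
      _ ≤ _ := by
          apply mul_le_mul_of_nonneg_left claim6 (le_of_lt hMpos)
  exact (mul_le_mul_iff_right₀ hMpos).1 hchain
end

section
/- Let θ ∈ (0,1) and let H be an n-vertex 3-graph that is strongly (1/3, θ)-dense. Then H has at most two tight components. -/
open Finset

variable {V : Type*} [DecidableEq V] [Fintype V]

/-!
Edges sharing a pair of vertices lie in one tight component, so each pair is covered by at most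
one component, and a covered pair lies in at least `n / 3` edges, all in that component. Around a
vertex `u` the neighbourhoods of `u` in the shadows of distinct components are therefore disjoint
sets of size at least `n / 3`, and so are the common neighbourhoods of the three sides of a
triangle whose sides lie in three different components. Counting against the `n` vertices, no
vertex lies in three components, no such triangle exists, and if `u` lies in two components then
no neighbour of `u` in one of them lies in a third. So a third component would avoid `u` and both
of its neighbourhoods, leaving it fewer than `n / 3` vertices, whereas every component spans more
than `n / 3` vertices; and three components with pairwise disjoint supports cannot fit either.
-/

lemma card_add_card_add_card_add_card_le {A B C D : Finset V} (hAB : Disjoint A B)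
    (hAC : Disjoint A C) (hAD : Disjoint A D) (hBC : Disjoint B C) (hBD : Disjoint B D)
    (hCD : Disjoint C D) : #A + #B + #C + #D ≤ Fintype.card V := by
  calc #A + #B + #C + #D = #(A ∪ B ∪ C ∪ D) := by
        rw [card_union_of_disjoint, card_union_of_disjoint, card_union_of_disjoint hAB]
        · exact disjoint_union_left.mpr ⟨hAC, hBC⟩
        · exact disjoint_union_left.mpr ⟨disjoint_union_left.mpr ⟨hAD, hBD⟩, hCD⟩
    _ ≤ Fintype.card V := card_le_univ _

namespace SameTightComponent

omit [Fintype V]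

variable {H : Finset (Finset V)}

instance : Std.Symm (EdgeAdj H) :=
  ⟨fun _ _ ⟨he, hf, hef⟩ => ⟨hf, he, by rwa [inter_comm]⟩⟩

lemma refl {e : Finset V} (he : e ∈ H) : SameTightComponent H e e :=
  ⟨he, he, .refl⟩

lemma symm {e f : Finset V} (h : SameTightComponent H e f) : SameTightComponent H f e :=
  ⟨h.2.1, h.1, Std.Symm.symm _ _ h.2.2⟩

lemma trans {e f g : Finset V} (hef : SameTightComponent H e f)
    (hfg : SameTightComponent H f g) : SameTightComponent H e g :=
  ⟨hef.1, hfg.2.1, hef.2.2.trans hfg.2.2⟩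

lemma of_pair_subset (h3 : ∀ e ∈ H, e.card = 3) {e f p : Finset V} (he : e ∈ H) (hf : f ∈ H)
    (hp : p.card = 2) (hpe : p ⊆ e) (hpf : p ⊆ f) : SameTightComponent H e f := by
  rcases eq_or_ne e f with rfl | hne
  · exact refl he
  refine ⟨he, hf, .single ⟨he, hf, le_antisymm ?_ (hp ▸ card_le_card (subset_inter hpe hpf))⟩⟩
  by_contra! hlt
  have hee : e ∩ f = e := eq_of_subset_of_card_le inter_subset_left (by rw [h3 e he]; omega)
  have hef : e ⊆ f := hee ▸ inter_subset_right
  exact hne (eq_of_subset_of_card_le hef (by rw [h3 e he, h3 f hf]))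

lemma of_common_pair (h3 : ∀ e ∈ H, e.card = 3) {e e' f f' p : Finset V}
    (hf : SameTightComponent H e f) (hf' : SameTightComponent H e' f') (hp : p.card = 2)
    (hpf : p ⊆ f) (hpf' : p ⊆ f') : SameTightComponent H e e' :=
  hf.trans ((of_pair_subset h3 hf.2.1 hf'.2.1 hp hpf hpf').trans hf'.symm)

end SameTightComponent

section TightComponents

variable {H : Finset (Finset V)}

def PosCodegreeAtLeast (H : Finset (Finset V)) (μ : ℝ) : Prop :=
  ∀ p : Finset V, p.card = 2 → degPair H p = 0 ∨ μ * Fintype.card V ≤ (degPair H p : ℝ)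

def pairNbhd (H : Finset (Finset V)) (p : Finset V) : Finset V :=
  univ.filter fun z => z ∉ p ∧ insert z p ∈ H

/- A tight component is represented by any of its edges `e`. `compNbhd H e u` is the set of
neighbours of `u` in the shadow of that component, `compSupport H e` its vertex set. -/
open Classical in
noncomputable def compNbhd (H : Finset (Finset V)) (e : Finset V) (u : V) : Finset V :=
  univ.filter fun w => w ≠ u ∧ ∃ f, SameTightComponent H e f ∧ u ∈ f ∧ w ∈ f

open Classical in
noncomputable def compSupport (H : Finset (Finset V)) (e : Finset V) : Finset V :=
  univ.filter fun v => ∃ f, SameTightComponent H e f ∧ v ∈ f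

@[simp]
lemma mem_pairNbhd {p : Finset V} {z : V} : z ∈ pairNbhd H p ↔ z ∉ p ∧ insert z p ∈ H := by
  simp [pairNbhd]

@[simp]
lemma mem_compNbhd {e : Finset V} {u w : V} :
    w ∈ compNbhd H e u ↔ w ≠ u ∧ ∃ f, SameTightComponent H e f ∧ u ∈ f ∧ w ∈ f := by
  simp [compNbhd]

@[simp]
lemma mem_compSupport {e : Finset V} {v : V} :
    v ∈ compSupport H e ↔ ∃ f, SameTightComponent H e f ∧ v ∈ f := by
  simp [compSupport]

lemma mem_compNbhd_comm {e : Finset V} {u w : V} : w ∈ compNbhd H e u ↔ u ∈ compNbhd H e w := by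
  simp only [mem_compNbhd]
  exact ⟨fun ⟨h, f, hf, hu, hw⟩ => ⟨h.symm, f, hf, hw, hu⟩,
    fun ⟨h, f, hf, hw, hu⟩ => ⟨h.symm, f, hf, hu, hw⟩⟩

lemma notMem_compNbhd_self {e : Finset V} {u : V} : u ∉ compNbhd H e u := by
  simp

lemma card_le_three_mul_card_pairNbhd (h3 : ∀ e ∈ H, e.card = 3)
    (hd : PosCodegreeAtLeast H (1 / 3)) {p e : Finset V} (hp : p.card = 2) (he : e ∈ H)
    (hpe : p ⊆ e) : Fintype.card V ≤ 3 * #(pairNbhd H p) := by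
  have hdeg : Fintype.card V ≤ 3 * degPair H p := by
    rcases hd p hp with h0 | h0
    · exact absurd h0 (card_pos.mpr ⟨e, mem_filter.mpr ⟨he, hpe⟩⟩).ne'
    · exact_mod_cast (by linarith : (Fintype.card V : ℝ) ≤ 3 * degPair H p)
  have hsub : H.filter (fun f => p ⊆ f) ⊆ (pairNbhd H p).image (insert · p) := by
    intro f hf
    obtain ⟨hfH, hpf⟩ := mem_filter.mp hf
    obtain ⟨z, hz, rfl⟩ := exists_eq_insert_iff.mpr ⟨hpf, by rw [hp, h3 f hfH]⟩
    exact mem_image.mpr ⟨z, mem_pairNbhd.mpr ⟨hz, hfH⟩, rfl⟩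
  have := (card_le_card hsub).trans card_image_le
  unfold degPair at hdeg
  omega

lemma pair_subset_of_mem_compNbhd {e : Finset V} {u x : V} (hx : x ∈ compNbhd H e u) :
    ∃ f, SameTightComponent H e f ∧ {u, x} ⊆ f := by
  obtain ⟨-, f, hf, huf, hxf⟩ := mem_compNbhd.mp hx
  exact ⟨f, hf, insert_subset huf (singleton_subset_iff.mpr hxf)⟩

lemma card_le_three_mul_card_pairNbhd_of_mem_compNbhd (h3 : ∀ e ∈ H, e.card = 3)
    (hd : PosCodegreeAtLeast H (1 / 3)) {e : Finset V} {u x : V} (hx : x ∈ compNbhd H e u) :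
    Fintype.card V ≤ 3 * #(pairNbhd H {u, x}) := by
  obtain ⟨f, hf, hpf⟩ := pair_subset_of_mem_compNbhd hx
  exact card_le_three_mul_card_pairNbhd h3 hd (card_pair (mem_compNbhd.mp hx).1.symm) hf.2.1 hpf

lemma pairNbhd_subset_compNbhd (h3 : ∀ e ∈ H, e.card = 3) {e : Finset V} {u x : V}
    (hx : x ∈ compNbhd H e u) : pairNbhd H {u, x} ⊆ compNbhd H e u := by
  intro z hz
  obtain ⟨hzp, hzH⟩ := mem_pairNbhd.mp hz
  obtain ⟨f, hf, hpf⟩ := pair_subset_of_mem_compNbhd hx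
  refine mem_compNbhd.mpr ⟨fun h => hzp (by simp [h]), insert z {u, x}, ?_, by simp, by simp⟩
  exact hf.trans (.of_pair_subset h3 hf.2.1 hzH (card_pair (mem_compNbhd.mp hx).1.symm) hpf
    (subset_insert _ _))

lemma card_le_three_mul_card_compNbhd (h3 : ∀ e ∈ H, e.card = 3)
    (hd : PosCodegreeAtLeast H (1 / 3)) {e : Finset V} {u : V} (hu : u ∈ compSupport H e) :
    Fintype.card V ≤ 3 * #(compNbhd H e u) := by
  obtain ⟨f, hf, huf⟩ := mem_compSupport.mp hu
  obtain ⟨x, hx⟩ : (f.erase u).Nonempty := by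
    rw [← card_pos, card_erase_of_mem huf, h3 f hf.2.1]; omega
  have hxN : x ∈ compNbhd H e u :=
    mem_compNbhd.mpr ⟨ne_of_mem_erase hx, f, hf, huf, mem_of_mem_erase hx⟩
  calc Fintype.card V ≤ 3 * #(pairNbhd H {u, x}) :=
        card_le_three_mul_card_pairNbhd_of_mem_compNbhd h3 hd hxN
    _ ≤ 3 * #(compNbhd H e u) := by grw [pairNbhd_subset_compNbhd h3 hxN]

lemma insert_compNbhd_subset_compSupport {e : Finset V} {u : V} (hu : u ∈ compSupport H e) :
    insert u (compNbhd H e u) ⊆ compSupport H e := by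
  refine insert_subset hu fun w hw => ?_
  obtain ⟨-, f, hf, -, hwf⟩ := mem_compNbhd.mp hw
  exact mem_compSupport.mpr ⟨f, hf, hwf⟩

lemma card_add_three_le_three_mul_card_compSupport (h3 : ∀ e ∈ H, e.card = 3)
    (hd : PosCodegreeAtLeast H (1 / 3)) {e : Finset V} (he : e ∈ H) :
    Fintype.card V + 3 ≤ 3 * #(compSupport H e) := by
  obtain ⟨u, hue⟩ : e.Nonempty := by rw [← card_pos, h3 e he]; omega
  have hu : u ∈ compSupport H e := mem_compSupport.mpr ⟨e, .refl he, hue⟩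
  have hcard := card_le_card (insert_compNbhd_subset_compSupport hu)
  rw [card_insert_of_notMem notMem_compNbhd_self] at hcard
  have := card_le_three_mul_card_compNbhd h3 hd hu
  omega

lemma disjoint_compNbhd (h3 : ∀ e ∈ H, e.card = 3) {e e' : Finset V}
    (hee' : ¬ SameTightComponent H e e') (u : V) :
    Disjoint (compNbhd H e u) (compNbhd H e' u) := by
  refine disjoint_left.mpr fun w hw hw' => hee' ?_
  obtain ⟨f, hf, hpf⟩ := pair_subset_of_mem_compNbhd hw
  obtain ⟨f', hf', hpf'⟩ := pair_subset_of_mem_compNbhd hw'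
  exact .of_common_pair h3 hf hf' (card_pair (mem_compNbhd.mp hw).1.symm) hpf hpf'

end TightComponents

section ThreeComponents

variable {H : Finset (Finset V)} {e₁ e₂ e₃ : Finset V}

lemma notMem_compSupport_of_mem_of_mem (h3 : ∀ e ∈ H, e.card = 3)
    (hd : PosCodegreeAtLeast H (1 / 3)) (h12 : ¬ SameTightComponent H e₁ e₂)
    (h13 : ¬ SameTightComponent H e₁ e₃) (h23 : ¬ SameTightComponent H e₂ e₃) {u : V}
    (hu₁ : u ∈ compSupport H e₁) (hu₂ : u ∈ compSupport H e₂) : u ∉ compSupport H e₃ := by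
  intro hu₃
  have hcount := card_add_card_add_card_add_card_le (disjoint_compNbhd h3 h12 u)
    (disjoint_compNbhd h3 h13 u) (disjoint_singleton_right.mpr notMem_compNbhd_self)
    (disjoint_compNbhd h3 h23 u) (disjoint_singleton_right.mpr notMem_compNbhd_self)
    (disjoint_singleton_right.mpr notMem_compNbhd_self)
  have := card_le_three_mul_card_compNbhd h3 hd hu₁
  have := card_le_three_mul_card_compNbhd h3 hd hu₂
  have := card_le_three_mul_card_compNbhd h3 hd hu₃
  rw [card_singleton] at hcount
  omega

/-- No triangle `u x z` has its three sides in the shadows of three different components. -/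
lemma disjoint_compNbhd_of_mem_compNbhd (h3 : ∀ e ∈ H, e.card = 3)
    (hd : PosCodegreeAtLeast H (1 / 3)) (h12 : ¬ SameTightComponent H e₁ e₂)
    (h13 : ¬ SameTightComponent H e₁ e₃) (h23 : ¬ SameTightComponent H e₂ e₃) {u x : V}
    (hx : x ∈ compNbhd H e₁ u) : Disjoint (compNbhd H e₂ u) (compNbhd H e₃ x) := by
  refine disjoint_left.mpr fun z hz₂ hz₃ => ?_
  have hA₁ := pairNbhd_subset_compNbhd h3 hx
  have hA₁' := pairNbhd_subset_compNbhd h3 (mem_compNbhd_comm.mp hx)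
  have hB₂ := pairNbhd_subset_compNbhd h3 hz₂
  have hB₂' := pairNbhd_subset_compNbhd h3 (mem_compNbhd_comm.mp hz₂)
  have hC₃ := pairNbhd_subset_compNbhd h3 hz₃
  have hC₃' := pairNbhd_subset_compNbhd h3 (mem_compNbhd_comm.mp hz₃)
  rw [pair_comm] at hA₁' hB₂' hC₃'
  have hAB := (disjoint_compNbhd h3 h12 u).mono hA₁ hB₂
  have hAC := (disjoint_compNbhd h3 h13 x).mono hA₁' hC₃
  have hBC := (disjoint_compNbhd h3 h23 z).mono hB₂' hC₃'
  have hN₁₃ := disjoint_left.mp (disjoint_compNbhd h3 h13 x)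
  have hcount := card_add_card_add_card_add_card_le hAB hAC
    (disjoint_singleton_right.mpr fun h => notMem_compNbhd_self (hA₁ h)) hBC
    (disjoint_singleton_right.mpr fun h => notMem_compNbhd_self (hB₂ h))
    (disjoint_singleton_right.mpr fun h => hN₁₃ (mem_compNbhd_comm.mp hx) (hC₃ h))
  have := card_le_three_mul_card_pairNbhd_of_mem_compNbhd h3 hd hx
  have := card_le_three_mul_card_pairNbhd_of_mem_compNbhd h3 hd hz₂
  have := card_le_three_mul_card_pairNbhd_of_mem_compNbhd h3 hd hz₃
  rw [card_singleton] at hcount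
  omega

lemma notMem_compSupport_of_mem_compNbhd (h3 : ∀ e ∈ H, e.card = 3)
    (hd : PosCodegreeAtLeast H (1 / 3)) (h12 : ¬ SameTightComponent H e₁ e₂)
    (h13 : ¬ SameTightComponent H e₁ e₃) (h23 : ¬ SameTightComponent H e₂ e₃) {u x : V}
    (hx : x ∈ compNbhd H e₁ u) (hu₂ : u ∈ compSupport H e₂) : x ∉ compSupport H e₃ := by
  intro hx₃
  have hA₁ := pairNbhd_subset_compNbhd h3 hx
  have hA₁' := pairNbhd_subset_compNbhd h3 (mem_compNbhd_comm.mp hx)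
  rw [pair_comm] at hA₁'
  have hcount := card_add_card_add_card_add_card_le
    ((disjoint_compNbhd h3 h12 u).mono_left hA₁) ((disjoint_compNbhd h3 h13 x).mono_left hA₁')
    (disjoint_singleton_right.mpr fun h => notMem_compNbhd_self (hA₁ h))
    (disjoint_compNbhd_of_mem_compNbhd h3 hd h12 h13 h23 hx)
    (disjoint_singleton_right.mpr notMem_compNbhd_self)
    (disjoint_singleton_right.mpr fun h =>
      disjoint_left.mp (disjoint_compNbhd h3 h13 x) (mem_compNbhd_comm.mp hx) h)
  have := card_le_three_mul_card_pairNbhd_of_mem_compNbhd h3 hd hx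
  have := card_le_three_mul_card_compNbhd h3 hd hu₂
  have := card_le_three_mul_card_compNbhd h3 hd hx₃
  rw [card_singleton] at hcount
  omega

lemma disjoint_compSupport (h3 : ∀ e ∈ H, e.card = 3) (hd : PosCodegreeAtLeast H (1 / 3))
    (h12 : ¬ SameTightComponent H e₁ e₂) (h13 : ¬ SameTightComponent H e₁ e₃)
    (h23 : ¬ SameTightComponent H e₂ e₃) (he₃ : e₃ ∈ H) :
    Disjoint (compSupport H e₁) (compSupport H e₂) := by
  refine disjoint_left.mpr fun u hu₁ hu₂ => ?_
  have hcount := card_add_card_add_card_add_card_le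
    (disjoint_left.mpr fun x hx₃ hx => notMem_compSupport_of_mem_compNbhd h3 hd h12 h13 h23 hx hu₂ hx₃)
    (disjoint_left.mpr fun x hx₃ hx =>
      notMem_compSupport_of_mem_compNbhd h3 hd (h12 ·.symm) h23 h13 hx hu₁ hx₃)
    (disjoint_singleton_right.mpr (notMem_compSupport_of_mem_of_mem h3 hd h12 h13 h23 hu₁ hu₂))
    (disjoint_compNbhd h3 h12 u) (disjoint_singleton_right.mpr notMem_compNbhd_self)
    (disjoint_singleton_right.mpr notMem_compNbhd_self)
  have := card_add_three_le_three_mul_card_compSupport h3 hd he₃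
  have := card_le_three_mul_card_compNbhd h3 hd hu₁
  have := card_le_three_mul_card_compNbhd h3 hd hu₂
  rw [card_singleton] at hcount
  omega

end ThreeComponents

theorem statement6_general (n : ℕ) (θ : ℝ)
    (H : Finset (Finset (Fin n))) (h3 : ∀ e ∈ H, e.card = 3)
    (hdense : StronglyDense3 H (1 / 3) θ) :
    AtMostTwoTightComponents H := by
  intro e₁ he₁ e₂ he₂ e₃ he₃
  by_contra! hsep
  obtain ⟨h12, h13, h23⟩ := hsep
  have hd : PosCodegreeAtLeast H (1 / 3) := hdense.2
  have hcount := card_add_card_add_card_add_card_le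
    (disjoint_compSupport h3 hd h12 h13 h23 he₃)
    (disjoint_compSupport h3 hd h13 h12 (h23 ·.symm) he₂) (disjoint_empty_right _)
    (disjoint_compSupport h3 hd h23 (h12 ·.symm) (h13 ·.symm) he₁) (disjoint_empty_right _)
    (disjoint_empty_right _)
  have := card_add_three_le_three_mul_card_compSupport h3 hd he₁
  have := card_add_three_le_three_mul_card_compSupport h3 hd he₂
  have := card_add_three_le_three_mul_card_compSupport h3 hd he₃
  rw [card_empty] at hcount
  omega

theorem statement6 (n : ℕ) (θ : ℝ) (hθ0 : 0 < θ) (hθ1 : θ < 1)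
    (H : Finset (Finset (Fin n))) (h3 : ∀ e ∈ H, e.card = 3)
    (hdense : StronglyDense3 H (1 / 3) θ) :
    AtMostTwoTightComponents H :=
  statement6_general n θ H h3 hdense
end
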